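/- arXiv:1704.07752 — 10 statements merged into one kernel-verified Lean document; each statement's English description precedes it below -/
import Mathlib

section
/- For every integer n ≥ 1 and every k with 1 ≤ k ≤ n and 2k ≤ n, the number of +1 entries of the convex ASM F_n^k equals k(n-k+1), the number of -1 entries equals (k-1)(n-k), and hence the total number of nonzeros equals 2k(n-k+1) - n. -/
open Finset

/-- A line (vector) of integers is "alternating" in the ASM sense:
all prefix sums are 0 or 1, and the total sum is 1. This is equivalent to the
nonzero entries being ±1, alternating in sign, beginning and ending with +1. -/
def AltLine {n : ℕ} (v : Fin n → ℤ) : Prop :=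
  (∀ t : Fin n, (∑ s ∈ Finset.univ.filter (fun s => s ≤ t), v s) = 0 ∨
      (∑ s ∈ Finset.univ.filter (fun s => s ≤ t), v s) = 1) ∧
  (∑ s, v s) = 1

/-- Alternating sign matrix. -/
def IsAsm {n : ℕ} (A : Matrix (Fin n) (Fin n) ℤ) : Prop :=
  (∀ i, AltLine (fun j => A i j)) ∧ (∀ j, AltLine (fun i => A i j))

/-- Alternating sign hypermatrix: every line in each of the three directions alternates. -/
def IsAshm {n : ℕ} (A : Fin n → Fin n → Fin n → ℤ) : Prop :=
  (∀ j k, AltLine (fun i => A i j k)) ∧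
  (∀ i k, AltLine (fun j => A i j k)) ∧
  (∀ i j, AltLine (fun k => A i j k))

/-- The ASHM-Latin square `L(A) = 1·A₁ + 2·A₂ + ⋯ + n·Aₙ` (planes indexed from 1). -/
def Lmat {n : ℕ} (A : Fin n → Fin n → Fin n → ℤ) (i j : Fin n) : ℤ :=
  ∑ k : Fin n, ((k.1 : ℤ) + 1) * A i j k

/-- The diamond-shaped convex ASM `F_n^k` (0-indexed positions; position (i,j) here
corresponds to (i+1,j+1) in 1-indexed notation). -/
def Fmat (n k : ℕ) : Matrix (Fin n) (Fin n) ℤ :=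
  fun i j =>
    if k ≤ i.1 + j.1 + 1 ∧ i.1 + j.1 + k + 1 ≤ 2 * n ∧ i.1 < j.1 + k ∧ j.1 < i.1 + k
    then (-1) ^ (i.1 + j.1 + k + 1) else 0

/-! In the diagonal coordinates `u = i + j + 1 - k` and `v = i - j + k - 1` the diamond of `F_n^k`
is the rectangle `0 ≤ u ≤ 2(n - k)`, `0 ≤ v ≤ 2(k - 1)`, in which `u ≡ v (mod 2)` and the sign of
the entry is `(-1)^u`. So the `+1` entries sit at `u, v` both even and the `-1` entries at `u, v`
both odd: `(n - k + 1) k` and `(n - k)(k - 1)` lattice points respectively. -/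

lemma card_ne_zero_eq_card_eq_one_add_card_eq_neg_one {ι : Type*} [Fintype ι] (f : ι → ℤ)
    (hf : ∀ x, f x = 0 ∨ f x = 1 ∨ f x = -1) :
    #{x | f x ≠ 0} = #{x | f x = 1} + #{x | f x = -1} := by
  classical
  rw [← card_union_of_disjoint (disjoint_filter.2 fun x _ h₁ h₂ => by omega), ← filter_or]
  refine congrArg card (filter_congr fun x _ => ?_)
  rcases hf x with h | h | h <;> simp [h]

lemma Fmat_eq_zero_or_one_or_neg_one (n k : ℕ) (i j : Fin n) :
    Fmat n k i j = 0 ∨ Fmat n k i j = 1 ∨ Fmat n k i j = -1 := by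
  unfold Fmat
  split_ifs
  · exact Or.inr (neg_one_pow_eq_or ℤ _)
  · exact Or.inl rfl

lemma Fmat_eq_neg_one_pow_iff {n k e : ℕ} (he : e ≤ 1) (i j : Fin n) :
    Fmat n k i j = (-1) ^ e ↔
      (k ≤ i.1 + j.1 + 1 ∧ i.1 + j.1 + k + 1 ≤ 2 * n ∧ i.1 < j.1 + k ∧ j.1 < i.1 + k) ∧
        (i.1 + j.1 + k + 1) % 2 = e := by
  unfold Fmat
  split_ifs with h
  · rw [neg_one_pow_eq_pow_mod_two]
    interval_cases e <;> rcases Nat.mod_two_eq_zero_or_one (i.1 + j.1 + k + 1) with hm | hm <;>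
      simp [h, hm]
  · exact iff_of_false (pow_ne_zero e (neg_ne_zero.2 one_ne_zero)).symm fun hc => h hc.1

/-- The entries equal to `(-1)^e` are `(i, j) = (a + b + e, a + k - 1 - b)` with
`a < n - k + 1 - e` and `b < k - e`. -/
lemma card_Fmat_eq_neg_one_pow {n k e : ℕ} (hkn : k ≤ n) (he : e ≤ 1) :
    #{p : Fin n × Fin n | Fmat n k p.1 p.2 = (-1) ^ e} = (n - k + 1 - e) * (k - e) := by
  rw [← Fintype.card_fin (n - k + 1 - e), ← Fintype.card_fin (k - e), ← Fintype.card_prod,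
    ← card_univ]
  symm
  refine card_bij (fun a _ => ((⟨a.1.1 + a.2.1 + e, by omega⟩ : Fin n),
      (⟨a.1.1 + k - 1 - a.2.1, by omega⟩ : Fin n))) ?_ ?_ ?_
  · intro a _
    rw [mem_filter, Fmat_eq_neg_one_pow_iff he]
    dsimp only
    exact ⟨mem_univ _, ⟨by omega, by omega, by omega, by omega⟩, by omega⟩
  · intro a _ b _ hab
    simp only [Prod.mk.injEq, Fin.mk.injEq] at hab
    ext <;> omega
  · intro p hp
    rw [mem_filter, Fmat_eq_neg_one_pow_iff he] at hp
    obtain ⟨-, ⟨h₁, h₂, h₃, h₄⟩, hpar⟩ := hp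
    refine ⟨(⟨(p.1.1 + p.2.1 + 1 - k - e) / 2, by omega⟩,
      ⟨(p.1.1 + k - 1 - p.2.1 - e) / 2, by omega⟩), mem_univ _, ?_⟩
    ext <;> simp only <;> omega

lemma mul_add_mul_eq_two_mul_sub {n k : ℕ} (hkn : k ≤ n) :
    k * (n - k + 1) + (k - 1) * (n - k) = 2 * k * (n - k + 1) - n := by
  rcases k with _ | m
  · simp
  obtain ⟨t, rfl⟩ := Nat.exists_eq_add_of_le hkn
  rw [Nat.add_sub_cancel_left, Nat.add_sub_cancel]
  exact (Nat.sub_eq_of_eq_add (by ring)).symm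

theorem stmt0_general (n k : ℕ) (hkn : k ≤ n) :
    (Finset.univ.filter (fun p : Fin n × Fin n => Fmat n k p.1 p.2 = 1)).card
        = k * (n - k + 1) ∧
    (Finset.univ.filter (fun p : Fin n × Fin n => Fmat n k p.1 p.2 = -1)).card
        = (k - 1) * (n - k) ∧
    (Finset.univ.filter (fun p : Fin n × Fin n => Fmat n k p.1 p.2 ≠ 0)).card
        = 2 * k * (n - k + 1) - n := by
  have hone := card_Fmat_eq_neg_one_pow (e := 0) hkn zero_le_one
  have hneg := card_Fmat_eq_neg_one_pow (e := 1) hkn le_rfl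
  rw [pow_zero, Nat.sub_zero, Nat.sub_zero, mul_comm] at hone
  rw [pow_one, Nat.add_sub_cancel, mul_comm] at hneg
  refine ⟨hone, hneg, ?_⟩
  rw [card_ne_zero_eq_card_eq_one_add_card_eq_neg_one _
    fun p => Fmat_eq_zero_or_one_or_neg_one n k p.1 p.2, hone, hneg, mul_add_mul_eq_two_mul_sub hkn]

theorem stmt0 (n k : ℕ) (hk1 : 1 ≤ k) (hkn : k ≤ n) (h2k : 2 * k ≤ n) :
    (Finset.univ.filter (fun p : Fin n × Fin n => Fmat n k p.1 p.2 = 1)).card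
        = k * (n - k + 1) ∧
    (Finset.univ.filter (fun p : Fin n × Fin n => Fmat n k p.1 p.2 = -1)).card
        = (k - 1) * (n - k) ∧
    (Finset.univ.filter (fun p : Fin n × Fin n => Fmat n k p.1 p.2 ≠ 0)).card
        = 2 * k * (n - k + 1) - n :=
  stmt0_general n k hkn
end

section
/- Let A = [A_1, A_2, …, A_n] be an n×n×n alternating sign hypermatrix. For each k with 1 ≤ k ≤ n, the partial sum A^(k) = A_1 + A_2 + … + A_k is a (0,1)-matrix with exactly k ones in every row and every column; in particular A^(k+1) has exactly n more ones than A^(k). -/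
open Finset

/-! Each entry of `A₁ + ⋯ + A_k` is a prefix sum of a vertical line of `A`, hence 0 or 1.
Its row (column) sums are sums over `k` planes of row (column) sums of an ASM, each equal to 1.
A 0/1 matrix whose `n` rows each sum to `k` has exactly `k n` ones. -/

theorem AltLine.sum_filter_val_lt_eq_zero_or_one {n : ℕ} {v : Fin n → ℤ} (hv : AltLine v)
    {k : ℕ} (hkn : k ≤ n) :
    (∑ s ∈ univ.filter (fun s : Fin n => s.1 < k), v s) = 0 ∨
      (∑ s ∈ univ.filter (fun s : Fin n => s.1 < k), v s) = 1 := by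
  rcases Nat.eq_zero_or_pos k with rfl | hk
  · simp
  have hfilter : univ.filter (fun s : Fin n => s.1 < k) =
      univ.filter (fun s => s ≤ (⟨k - 1, by omega⟩ : Fin n)) := by
    ext s
    simp only [mem_filter, mem_univ, true_and, Fin.le_def]
    omega
  rw [hfilter]
  exact hv.1 _

theorem sum_sum_filter_val_lt_of_altLine {m n : ℕ} {B : Fin m → Fin n → ℤ}
    (hB : ∀ s, AltLine (fun j => B j s)) {k : ℕ} (hkn : k ≤ n) :
    (∑ j, ∑ s ∈ univ.filter (fun s : Fin n => s.1 < k), B j s) = k := by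
  rw [sum_comm, sum_congr rfl fun s _ => (hB s).2, sum_const, Fin.card_filter_val_lt,
    min_eq_right hkn, nsmul_one]

theorem natCast_card_filter_eq_one_of_zero_or_one {ι : Type*} (s : Finset ι) (f : ι → ℤ)
    (hf : ∀ p ∈ s, f p = 0 ∨ f p = 1) :
    ((s.filter (fun p => f p = 1)).card : ℤ) = ∑ p ∈ s, f p := by
  rw [← sum_boole]
  refine sum_congr rfl fun p hp => ?_
  rcases hf p hp with h | h <;> simp [h]

theorem stmt1_general {n : ℕ} (A : Fin n → Fin n → Fin n → ℤ) (hA : IsAshm A)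
    (k : ℕ) (hkn : k ≤ n) :
    (∀ i j : Fin n,
        (∑ s ∈ Finset.univ.filter (fun s : Fin n => s.1 < k), A i j s) = 0 ∨
        (∑ s ∈ Finset.univ.filter (fun s : Fin n => s.1 < k), A i j s) = 1) ∧
    (∀ i : Fin n,
        (∑ j : Fin n, ∑ s ∈ Finset.univ.filter (fun s : Fin n => s.1 < k), A i j s)
          = (k : ℤ)) ∧
    (∀ j : Fin n,
        (∑ i : Fin n, ∑ s ∈ Finset.univ.filter (fun s : Fin n => s.1 < k), A i j s)
          = (k : ℤ)) ∧
    (Finset.univ.filter (fun p : Fin n × Fin n =>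
        (∑ s ∈ Finset.univ.filter (fun s : Fin n => s.1 < k), A p.1 p.2 s) = 1)).card
      = k * n := by
  obtain ⟨hcol, hrow, hvert⟩ := hA
  have hentry := fun i j => (hvert i j).sum_filter_val_lt_eq_zero_or_one hkn
  have hrowSum := fun i => sum_sum_filter_val_lt_of_altLine (hrow i) hkn
  refine ⟨hentry, hrowSum, fun j => sum_sum_filter_val_lt_of_altLine (hcol j) hkn, ?_⟩
  have hcard := natCast_card_filter_eq_one_of_zero_or_one univ
    (fun p : Fin n × Fin n => ∑ s ∈ univ.filter (fun s : Fin n => s.1 < k), A p.1 p.2 s)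
    fun p _ => hentry p.1 p.2
  rw [Fintype.sum_prod_type, sum_congr rfl fun i _ => hrowSum i, sum_const, card_univ,
    Fintype.card_fin, nsmul_eq_mul] at hcard
  exact_mod_cast hcard.trans (mul_comm _ _)

theorem stmt1 {n : ℕ} (A : Fin n → Fin n → Fin n → ℤ) (hA : IsAshm A)
    (k : ℕ) (hk1 : 1 ≤ k) (hkn : k ≤ n) :
    (∀ i j : Fin n,
        (∑ s ∈ Finset.univ.filter (fun s : Fin n => s.1 < k), A i j s) = 0 ∨
        (∑ s ∈ Finset.univ.filter (fun s : Fin n => s.1 < k), A i j s) = 1) ∧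
    (∀ i : Fin n,
        (∑ j : Fin n, ∑ s ∈ Finset.univ.filter (fun s : Fin n => s.1 < k), A i j s)
          = (k : ℤ)) ∧
    (∀ j : Fin n,
        (∑ i : Fin n, ∑ s ∈ Finset.univ.filter (fun s : Fin n => s.1 < k), A i j s)
          = (k : ℤ)) ∧
    (Finset.univ.filter (fun p : Fin n × Fin n =>
        (∑ s ∈ Finset.univ.filter (fun s : Fin n => s.1 < k), A p.1 p.2 s) = 1)).card
      = k * n :=
  stmt1_general A hA k hkn
end

section
/- The maximum number of nonzero entries of an n×n×n alternating sign hypermatrix is n(n²+2)/3. More precisely, if A = [a_{ijk}] is an n×n×n ASHM, then for all i, j, k, the number of nonzeros in the column line {a_{ijk} : 1 ≤ j ≤ n} of the k-th horizontal plane, with row index i, is at most 2·min{i,k} − 1, and consequently the total number of nonzeros of A is at most n(n²+2)/3. -/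
open Finset

private def pref {n : ℕ} (v : Fin n → ℤ) (t : ℕ) : ℤ :=
  ∑ s ∈ Finset.univ.filter (fun s : Fin n => s.1 < t), v s

private lemma pref_zero {n : ℕ} (v : Fin n → ℤ) : pref v 0 = 0 := by
  simp [pref]

private lemma pref_succ {n : ℕ} (v : Fin n → ℤ) (j : Fin n) :
    pref v (j.1 + 1) = pref v j.1 + v j := by
  unfold pref
  have h : Finset.univ.filter (fun s : Fin n => s.1 < j.1 + 1)
      = insert j (Finset.univ.filter (fun s : Fin n => s.1 < j.1)) := by
    ext s
    simp only [mem_filter, mem_univ, true_and, mem_insert]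
    constructor
    · intro hs
      rcases Nat.lt_succ_iff_lt_or_eq.mp hs with h | h
      · exact Or.inr h
      · exact Or.inl (Fin.ext h)
    · rintro (rfl | hs) <;> omega
  rw [h, Finset.sum_insert (by simp)]
  ring

private lemma pref_of_ge {n : ℕ} (v : Fin n → ℤ) (t : ℕ) (h : n ≤ t) :
    pref v t = ∑ s, v s := by
  unfold pref
  congr 1
  apply Finset.filter_true_of_mem
  intro s _
  exact lt_of_lt_of_le s.2 h

private lemma altLine_pref {n : ℕ} {v : Fin n → ℤ} (h : AltLine v) (t : ℕ) :
    pref v t = 0 ∨ pref v t = 1 := by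
  rcases Nat.eq_zero_or_pos t with rfl | ht
  · exact Or.inl (pref_zero v)
  by_cases hn : t ≤ n
  · obtain ⟨t', rfl⟩ : ∃ t', t = t' + 1 := ⟨t - 1, by omega⟩
    have ht' : t' < n := by omega
    have h1 := h.1 ⟨t', ht'⟩
    have heq : pref v (t' + 1)
        = ∑ s ∈ Finset.univ.filter (fun s : Fin n => s ≤ (⟨t', ht'⟩ : Fin n)), v s := by
      unfold pref
      congr 1
      ext s
      simp [Fin.le_def, Nat.lt_succ_iff]
    rw [heq]
    exact h1
  · rw [pref_of_ge v t (by omega), h.2]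
    exact Or.inr rfl

private lemma card_filter_val {n : ℕ} (p : ℕ → Prop) [DecidablePred p] :
    (Finset.univ.filter (fun s : Fin n => p s.1)).card
      = ((Finset.range n).filter p).card := by
  apply Finset.card_nbij (fun s => s.1)
  · intro a ha
    simp only [Finset.mem_coe, mem_filter, mem_univ, true_and] at ha
    simp [a.2, ha]
  · intro a _ b _ hab
    exact Fin.ext hab
  · intro x hx
    simp only [coe_filter, Set.mem_setOf_eq, Finset.mem_range, Finset.mem_coe] at hx
    exact ⟨⟨x, hx.1⟩, by simp [hx.2], rfl⟩

private lemma card_filter_lt {n t : ℕ} (ht : t ≤ n) :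
    (Finset.univ.filter (fun s : Fin n => s.1 < t)).card = t := by
  rw [card_filter_val (fun m => m < t)]
  have : (Finset.range n).filter (fun m => m < t) = Finset.range t := by
    ext m
    simp only [mem_filter, Finset.mem_range]
    omega
  rw [this, Finset.card_range]

private lemma sum_pref {n : ℕ} (B : Fin n → Fin n → ℤ) (t : ℕ) (ht : t ≤ n)
    (hB : ∀ i', (∑ j, B i' j) = 1) :
    ∑ j, pref (fun i' => B i' j) t = t := by
  unfold pref
  rw [Finset.sum_comm]
  have h1 : ∀ i' ∈ Finset.univ.filter (fun s : Fin n => s.1 < t),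
      (∑ j, B i' j) = 1 := fun i' _ => hB i'
  rw [Finset.sum_congr rfl h1, Finset.sum_const, card_filter_lt ht, nsmul_eq_mul, mul_one]


private lemma plus_le {n : ℕ} (B : Fin n → Fin n → ℤ) (t : ℕ) (ht : t ≤ n)
    (hB : ∀ i', (∑ j, B i' j) = 1) (hAlt : ∀ j, AltLine (fun i' => B i' j))
    (P : Finset (Fin n)) (hPmem : ∀ j ∈ P, pref (fun i' => B i' j) t = 1) :
    (P.card : ℤ) ≤ t := by
  have h1 : (P.card : ℤ) = ∑ j ∈ P, pref (fun i' => B i' j) t := by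
    rw [Finset.sum_congr rfl hPmem, Finset.sum_const, nsmul_eq_mul, mul_one]
  rw [h1, ← sum_pref B t ht hB]
  apply Finset.sum_le_sum_of_subset_of_nonneg (Finset.subset_univ P)
  intro j _ _
  rcases altLine_pref (hAlt j) t with h | h <;> omega

private lemma plus_le' {n : ℕ} (B : Fin n → Fin n → ℤ) (t : ℕ) (ht : t ≤ n)
    (hB : ∀ i', (∑ j, B i' j) = 1) (hAlt : ∀ j, AltLine (fun i' => B i' j))
    (P : Finset (Fin n)) (hPmem : ∀ j ∈ P, pref (fun i' => B i' j) t = 0) :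
    (P.card : ℤ) ≤ (n : ℤ) - t := by
  have h1 : (P.card : ℤ) = ∑ j ∈ P, (1 - pref (fun i' => B i' j) t) := by
    have : ∀ j ∈ P, (1 : ℤ) - pref (fun i' => B i' j) t = 1 := by
      intro j hj; rw [hPmem j hj]; ring
    rw [Finset.sum_congr rfl this, Finset.sum_const, nsmul_eq_mul, mul_one]
  rw [h1]
  have h2 : ∑ j : Fin n, ((1 : ℤ) - pref (fun i' => B i' j) t) = (n : ℤ) - t := by
    rw [Finset.sum_sub_distrib, sum_pref B t ht hB, Finset.sum_const, Finset.card_univ,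
      Fintype.card_fin, nsmul_eq_mul, mul_one]
  rw [← h2]
  apply Finset.sum_le_sum_of_subset_of_nonneg (Finset.subset_univ P)
  intro j _ _
  rcases altLine_pref (hAlt j) t with h | h <;> omega

/-- Main structural lemma: the line `A i · k` has `2m-1` nonzeros where `m` (the number
of `+1`s) is bounded by `i+1`, `k+1`, `n-i`, `n-k`. -/
private lemma line_bound {n : ℕ} (A : Fin n → Fin n → Fin n → ℤ) (hA : IsAshm A)
    (i k : Fin n) :
    ∃ m : ℕ, 1 ≤ m ∧ m ≤ i.1 + 1 ∧ m ≤ k.1 + 1 ∧ m ≤ n - i.1 ∧ m ≤ n - k.1 ∧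
      (Finset.univ.filter (fun j : Fin n => A i j k ≠ 0)).card = 2 * m - 1 := by
  classical
  set v : Fin n → ℤ := fun j => A i j k with hv
  have hvAlt : AltLine v := hA.2.1 i k
  -- trichotomy of entries
  have tri : ∀ j, v j = -1 ∨ v j = 0 ∨ v j = 1 := by
    intro j
    have h1 := altLine_pref hvAlt (j.1 + 1)
    have h2 := altLine_pref hvAlt j.1
    have h3 := pref_succ v j
    omega
  set P := Finset.univ.filter (fun j : Fin n => v j = 1) with hP
  set N := Finset.univ.filter (fun j : Fin n => v j = -1) with hN
  -- key facts about +1 positions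
  have hkey1 : ∀ j ∈ P, pref (fun i' => A i' j k) (i.1 + 1) = 1 ∧
      pref (fun i' => A i' j k) i.1 = 0 := by
    intro j hj
    have hj1 : v j = 1 := (Finset.mem_filter.mp hj).2
    have hw : AltLine (fun i' => A i' j k) := hA.1 j k
    have h1 := altLine_pref hw (i.1 + 1)
    have h2 := altLine_pref hw i.1
    have h3 := pref_succ (fun i' => A i' j k) i
    simp only [hv] at hj1
    omega
  have hkey2 : ∀ j ∈ P, pref (fun k' => A i j k') (k.1 + 1) = 1 ∧
      pref (fun k' => A i j k') k.1 = 0 := by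
    intro j hj
    have hj1 : v j = 1 := (Finset.mem_filter.mp hj).2
    have hw : AltLine (fun k' => A i j k') := hA.2.2 i j
    have h1 := altLine_pref hw (k.1 + 1)
    have h2 := altLine_pref hw k.1
    have h3 := pref_succ (fun k' => A i j k') k
    simp only [hv] at hj1
    omega
  have hBi : ∀ i' : Fin n, (∑ j, A i' j k) = 1 := fun i' => (hA.2.1 i' k).2
  have hBk : ∀ k' : Fin n, (∑ j, A i j k') = 1 := fun k' => (hA.2.1 i k').2
  have hb1 : (P.card : ℤ) ≤ (i.1 : ℤ) + 1 := by
    have := plus_le (fun i' j => A i' j k) (i.1 + 1) i.2 hBi (fun j => hA.1 j k) P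
      (fun j hj => (hkey1 j hj).1)
    push_cast at this ⊢; linarith
  have hb2 : (P.card : ℤ) ≤ (k.1 : ℤ) + 1 := by
    have := plus_le (fun k' j => A i j k') (k.1 + 1) k.2 hBk (fun j => hA.2.2 i j) P
      (fun j hj => (hkey2 j hj).1)
    push_cast at this ⊢; linarith
  have hb3 : (P.card : ℤ) ≤ (n : ℤ) - i.1 := by
    exact plus_le' (fun i' j => A i' j k) i.1 (le_of_lt i.2) hBi (fun j => hA.1 j k) P
      (fun j hj => (hkey1 j hj).2)
  have hb4 : (P.card : ℤ) ≤ (n : ℤ) - k.1 := by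
    exact plus_le' (fun k' j => A i j k') k.1 (le_of_lt k.2) hBk (fun j => hA.2.2 i j) P
      (fun j hj => (hkey2 j hj).2)
  -- counting: sum = P.card - N.card = 1
  have hsum : (P.card : ℤ) - N.card = 1 := by
    have h1 : ∑ j, v j = 1 := hvAlt.2
    have h2 : ∑ j, v j = ∑ j : Fin n, ((if v j = 1 then (1:ℤ) else 0)
        - (if v j = -1 then (1:ℤ) else 0)) := by
      apply Finset.sum_congr rfl
      intro j _
      rcases tri j with h | h | h <;> simp [h]
    rw [h2, Finset.sum_sub_distrib] at h1
    simp only [Finset.sum_boole] at h1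
    rw [hP, hN]
    exact_mod_cast h1
  -- nonzero count = P.card + N.card
  have hcards : (Finset.univ.filter (fun j : Fin n => A i j k ≠ 0)).card
      = P.card + N.card := by
    have hunion : Finset.univ.filter (fun j : Fin n => A i j k ≠ 0) = P ∪ N := by
      ext j
      simp only [hP, hN, Finset.mem_filter, Finset.mem_univ, true_and, Finset.mem_union]
      rcases tri j with h | h | h <;> simp [hv] at h ⊢ <;> omega
    rw [hunion, Finset.card_union_of_disjoint]
    rw [Finset.disjoint_left]
    intro j hjP hjN
    have h1 : v j = 1 := (Finset.mem_filter.mp hjP).2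
    have h2 : v j = -1 := (Finset.mem_filter.mp hjN).2
    omega
  have hi2 : i.1 < n := i.2
  have hk2 : k.1 < n := k.2
  refine ⟨P.card, by omega, by omega, by omega, by omega, by omega, by omega⟩



private lemma six_sum (n : ℕ) :
    6 * ∑ m ∈ Finset.range n, (n - 2*m)^2 = n*(n+1)*(n+2) := by
  induction n using Nat.twoStepInduction with
  | zero => simp
  | one => norm_num
  | more n ih _ =>
    have h1 : ∑ m ∈ Finset.range (n+2), ((n+2) - 2*m)^2
        = (∑ m ∈ Finset.range (n+1), (n - 2*m)^2) + (n+2)^2 := by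
      rw [Finset.sum_range_succ']
      congr 1
      apply Finset.sum_congr rfl
      intro m _
      congr 1
      omega
    have h2 : ∑ m ∈ Finset.range (n+1), (n - 2*m)^2
        = ∑ m ∈ Finset.range n, (n - 2*m)^2 := by
      rw [Finset.sum_range_succ]
      have : n - 2*n = 0 := by omega
      rw [this]
      simp
    rw [h1, h2, Nat.mul_add, ih]
    ring

private lemma arith (n : ℕ) :
    (∑ i : Fin n, ∑ k : Fin n,
        (2 * min (min (i.1+1) (n - i.1)) (min (k.1+1) (n - k.1)) - 1))
      ≤ n * (n^2 + 2) / 3 := by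
  set f : Fin n → ℕ := fun i => min (i.1+1) (n - i.1) with hf
  have hf1 : ∀ i, 1 ≤ f i := by
    intro i; have := i.2; simp only [hf]; omega
  have hfn : ∀ i, f i ≤ n := by
    intro i; have := i.2; simp only [hf]; omega
  set T : ℕ := ∑ i : Fin n, ∑ k : Fin n, min (f i) (f k) with hT
  set S : ℕ := ∑ i : Fin n, ∑ k : Fin n, (2 * min (f i) (f k) - 1) with hS
  -- S + n*n = 2*T
  have hST : S + n*n = 2*T := by
    have h1 : ∑ i : Fin n, ∑ k : Fin n, ((2 * min (f i) (f k) - 1) + 1)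
        = ∑ i : Fin n, ∑ k : Fin n, 2 * min (f i) (f k) := by
      apply Finset.sum_congr rfl; intro i _
      apply Finset.sum_congr rfl; intro k _
      have := hf1 i; have := hf1 k
      omega
    have h2 : ∑ i : Fin n, ∑ k : Fin n, ((2 * min (f i) (f k) - 1) + 1)
        = S + n*n := by
      simp only [Finset.sum_add_distrib, Finset.sum_const, Finset.card_univ,
        Fintype.card_fin, smul_eq_mul, mul_one, hS]
    have h3 : ∑ i : Fin n, ∑ k : Fin n, 2 * min (f i) (f k) = 2 * T := by
      rw [hT, Finset.mul_sum]
      apply Finset.sum_congr rfl; intro i _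
      rw [Finset.mul_sum]
    omega
  -- counting lemma for layers
  have hcm : ∀ m : ℕ, (∑ i : Fin n, if m < f i then 1 else 0) = n - 2*m := by
    intro m
    rw [← Finset.card_filter]
    rw [card_filter_val (fun x => m < min (x+1) (n - x))]
    have : (Finset.range n).filter (fun x => m < min (x+1) (n - x))
        = Finset.Ico m (n - m) := by
      ext x
      simp only [Finset.mem_filter, Finset.mem_range, Finset.mem_Ico]
      omega
    rw [this, Nat.card_Ico]
    omega
  -- T as a sum of squares
  have hTsq : T = ∑ m ∈ Finset.range n, (n - 2*m)^2 := by
    have hmin : ∀ i k : Fin n, min (f i) (f k)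
        = ∑ m ∈ Finset.range n, ((if m < f i then 1 else 0) * (if m < f k then 1 else 0)) := by
      intro i k
      have step : ∀ m ∈ Finset.range n,
          ((if m < f i then 1 else 0) * (if m < f k then 1 else 0) : ℕ)
            = if m < min (f i) (f k) then 1 else 0 := by
        intro m _
        split_ifs <;> omega
      rw [Finset.sum_congr rfl step, ← Finset.card_filter]
      have : (Finset.range n).filter (fun m => m < min (f i) (f k))
          = Finset.range (min (f i) (f k)) := by
        ext m
        simp only [Finset.mem_filter, Finset.mem_range]
        have := hfn i
        omega
      rw [this, Finset.card_range]
    calc T = ∑ i : Fin n, ∑ k : Fin n, ∑ m ∈ Finset.range n,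
          ((if m < f i then 1 else 0) * (if m < f k then 1 else 0)) := by
            rw [hT]
            exact Finset.sum_congr rfl fun i _ => Finset.sum_congr rfl fun k _ => hmin i k
      _ = ∑ i : Fin n, ∑ m ∈ Finset.range n, ∑ k : Fin n,
          ((if m < f i then 1 else 0) * (if m < f k then 1 else 0)) := by
            exact Finset.sum_congr rfl fun i _ => Finset.sum_comm
      _ = ∑ m ∈ Finset.range n, ∑ i : Fin n, ∑ k : Fin n,
          ((if m < f i then 1 else 0) * (if m < f k then 1 else 0)) :=
            Finset.sum_comm
      _ = ∑ m ∈ Finset.range n, (n - 2*m)^2 := by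
            apply Finset.sum_congr rfl; intro m _
            rw [← Finset.sum_mul_sum, hcm m]
            rw [sq]
  have h6 : 6 * T = n*(n+1)*(n+2) := by rw [hTsq]; exact six_sum n
  have key : n*(n+1)*(n+2) = n*(n^2+2) + 3*(n*n) := by ring
  have hfin : S * 3 ≤ n * (n^2 + 2) := by linarith
  calc (∑ i : Fin n, ∑ k : Fin n,
        (2 * min (min (i.1+1) (n - i.1)) (min (k.1+1) (n - k.1)) - 1)) = S := rfl
    _ ≤ n * (n^2 + 2) / 3 := (Nat.le_div_iff_mul_le (by norm_num)).mpr hfin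

theorem stmt3 {n : ℕ} (A : Fin n → Fin n → Fin n → ℤ) (hA : IsAshm A) :
    (∀ i k : Fin n,
        (Finset.univ.filter (fun j : Fin n => A i j k ≠ 0)).card
          ≤ 2 * min (i.1 + 1) (k.1 + 1) - 1) ∧
    (Finset.univ.filter (fun p : Fin n × Fin n × Fin n =>
        A p.1 p.2.1 p.2.2 ≠ 0)).card ≤ n * (n ^ 2 + 2) / 3 := by
  obtain hline := line_bound A hA
  constructor
  · intro i k
    obtain ⟨m, hm1, hm2, hm3, _, _, hcard⟩ := hline i k
    omega
  · have hsplit : (Finset.univ.filter (fun p : Fin n × Fin n × Fin n =>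
        A p.1 p.2.1 p.2.2 ≠ 0)).card
        = ∑ i : Fin n, ∑ k : Fin n,
            (Finset.univ.filter (fun j : Fin n => A i j k ≠ 0)).card := by
      rw [Finset.card_filter, Fintype.sum_prod_type]
      apply Finset.sum_congr rfl; intro i _
      rw [Fintype.sum_prod_type, Finset.sum_comm]
      apply Finset.sum_congr rfl; intro k _
      rw [Finset.card_filter]
    rw [hsplit]
    calc ∑ i : Fin n, ∑ k : Fin n,
          (Finset.univ.filter (fun j : Fin n => A i j k ≠ 0)).card
        ≤ ∑ i : Fin n, ∑ k : Fin n,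
          (2 * min (min (i.1+1) (n - i.1)) (min (k.1+1) (n - k.1)) - 1) := by
          apply Finset.sum_le_sum; intro i _
          apply Finset.sum_le_sum; intro k _
          obtain ⟨m, hm1, hm2, hm3, hm4, hm5, hcard⟩ := hline i k
          omega
      _ ≤ n * (n^2 + 2) / 3 := arith n
end

section
/- Let A = [a_{ijk}] be an n×n×n ASHM and L(A) = [l_{ij}] = ∑_{k=1}^n k·A_k its ASHM-Latin square. Then for all i, j: 1 ≤ l_{ij} ≤ n. Moreover, if the nonzero entries of the vertical line (a_{ij1},…,a_{ijn}) occur at positions k_1 < k_2 < … < k_p, then l_{ij} ≥ k_1 + (p−1)/2 and l_{ij} ≤ k_p − (p−1)/2; in particular if l_{ij} = 1 then a_{ij1} = 1 and a_{ijk} = 0 for k > 1, and if l_{ij} = n then a_{ijn} = 1 and a_{ijk} = 0 for k < n. -/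
/-!
Write `S t` for the sum of the first `t` entries of the vertical line `v = (a_{ij1}, …, a_{ijn})`.
The alternating condition says `S t ∈ {0, 1}`, with `S 0 = 0` and `S n = 1`, so the entries are
`0, ±1`, and with `m` entries `-1` there are `p = 2m + 1` nonzero ones. Summation by parts gives
`l_{ij} = ∑_{t < n} (1 - S t) = #{t < n | S t = 0}`. Now `S t = 0` for `t ≤ k₁ - 1` and right
after each `-1`, while `S t = 1` for `t ≥ k_p` and right before each `-1`; counting gives
`k₁ + m ≤ l_{ij} ≤ k_p - m` (positions counted from 1). At `l_{ij} = 1` or `l_{ij} = n` this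
forces `m = 0` and the single nonzero entry to sit at the end.
-/

open Finset

/-- The set of positions of nonzero entries in the vertical line through (i,j). -/
def nzSet {n : ℕ} (A : Fin n → Fin n → Fin n → ℤ) (i j : Fin n) : Finset (Fin n) :=
  Finset.univ.filter (fun k => A i j k ≠ 0)

section PrefixSum

variable {n : ℕ} (v : Fin n → ℤ)

-- `prefixSum v t = v 0 + ⋯ + v (t - 1)`, so `AltLine v` constrains it at `t = 1, …, n`.
def prefixSum (t : ℕ) : ℤ := ∑ s ∈ univ.filter (fun s : Fin n => (s : ℕ) < t), v s

@[simp]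
theorem prefixSum_zero : prefixSum v 0 = 0 := by
  simp [prefixSum]

theorem prefixSum_succ (k : Fin n) : prefixSum v (k + 1) = prefixSum v k + v k := by
  have : univ.filter (fun s : Fin n => (s : ℕ) < k + 1) =
      insert k (univ.filter (fun s : Fin n => (s : ℕ) < k)) := by
    ext s; simp only [mem_filter, mem_insert, mem_univ, true_and, Fin.ext_iff]; omega
  rw [prefixSum, this, sum_insert (by simp), add_comm, prefixSum]

theorem prefixSum_eq_sum_of_lt {t : ℕ} (h : ∀ s, v s ≠ 0 → (s : ℕ) < t) :
    prefixSum v t = ∑ s, v s :=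
  sum_filter_of_ne fun s _ => h s

theorem prefixSum_eq_zero_of_le {t : ℕ} (h : ∀ s, v s ≠ 0 → t ≤ s) : prefixSum v t = 0 :=
  sum_eq_zero fun s hs => not_not.1 fun hne => (h s hne).not_gt (mem_filter.1 hs).2

theorem sum_succ_mul_eq_sum_sub_prefixSum :
    ∑ k : Fin n, ((k : ℤ) + 1) * v k = ∑ t ∈ range n, (∑ s, v s - prefixSum v t) := by
  have tail (t : ℕ) :
      ∑ s, v s - prefixSum v t = ∑ s : Fin n, if t ≤ (s : ℕ) then v s else 0 := by
    rw [← sum_filter, prefixSum, sub_eq_iff_eq_add',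
      ← sum_filter_add_sum_filter_not _ (fun s : Fin n => (s : ℕ) < t)]
    simp only [not_lt]
  have count (k : Fin n) : #((range n).filter (· ≤ (k : ℕ))) = k + 1 := by
    rw [← card_range (k + 1)]
    congr 1
    ext t
    simp only [mem_filter, mem_range]
    omega
  simp_rw [tail]
  rw [sum_comm]
  refine sum_congr rfl fun k _ => ?_
  rw [← sum_filter, sum_const, count, nsmul_eq_mul]
  push_cast
  ring

end PrefixSum

def prefixZeros {n : ℕ} (v : Fin n → ℤ) : Finset ℕ := (range n).filter (prefixSum v · = 0)

namespace AltLine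

variable {n : ℕ} {v : Fin n → ℤ}

theorem sum_eq_one (hv : AltLine v) : ∑ s, v s = 1 := hv.2

theorem prefixSum_eq_one_of_le (hv : AltLine v) {t : ℕ} (ht : n ≤ t) : prefixSum v t = 1 := by
  rw [prefixSum_eq_sum_of_lt v fun s _ => s.2.trans_le ht, hv.sum_eq_one]

theorem prefixSum_eq_zero_or_one (hv : AltLine v) (t : ℕ) :
    prefixSum v t = 0 ∨ prefixSum v t = 1 := by
  rcases Nat.eq_zero_or_pos t with rfl | ht
  · simp
  rcases le_or_gt t n with htn | htn
  · have : univ.filter (fun s : Fin n => (s : ℕ) < t) =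
        univ.filter (· ≤ ⟨t - 1, by omega⟩) := by
      ext s; simp only [mem_filter, mem_univ, true_and, Fin.le_def]; omega
    rw [prefixSum, this]
    exact hv.1 _
  · exact Or.inr (hv.prefixSum_eq_one_of_le htn.le)

theorem eq_neg_one_or_eq_zero_or_eq_one (hv : AltLine v) (k : Fin n) :
    v k = -1 ∨ v k = 0 ∨ v k = 1 := by
  have := prefixSum_succ v k
  rcases hv.prefixSum_eq_zero_or_one k with h | h <;>
    rcases hv.prefixSum_eq_zero_or_one (k + 1) with h' | h' <;> omega

theorem prefixSum_of_eq_neg_one (hv : AltLine v) {q : Fin n} (hq : v q = -1) :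
    prefixSum v q = 1 ∧ prefixSum v (q + 1) = 0 ∧ (q : ℕ) + 1 < n := by
  have := prefixSum_succ v q
  have hlast : (q : ℕ) + 1 ≠ n := fun h => by
    have := hv.prefixSum_eq_one_of_le h.ge
    rcases hv.prefixSum_eq_zero_or_one q with h | h <;> omega
  rcases hv.prefixSum_eq_zero_or_one q with h | h <;>
    rcases hv.prefixSum_eq_zero_or_one (q + 1) with h' | h' <;> omega

theorem card_support (hv : AltLine v) :
    #(univ.filter (v · ≠ 0)) = 2 * #(univ.filter (v · = -1)) + 1 := by
  have key (s : Fin n) :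
      (if v s ≠ 0 then 1 else 0 : ℤ) = v s + 2 * if v s = -1 then 1 else 0 := by
    rcases hv.eq_neg_one_or_eq_zero_or_eq_one s with h | h | h <;> simp [h]
  have : (#(univ.filter (v · ≠ 0)) : ℤ) = 2 * #(univ.filter (v · = -1)) + 1 := by
    rw [← sum_boole, sum_congr rfl fun s _ => key s, sum_add_distrib, ← mul_sum, sum_boole,
      hv.sum_eq_one, add_comm]
  exact_mod_cast this

theorem support_nonempty (hv : AltLine v) : (univ.filter (v · ≠ 0)).Nonempty := by
  rw [← card_pos, hv.card_support]
  omega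

theorem sum_succ_mul_eq_card_prefixZeros (hv : AltLine v) :
    ∑ k : Fin n, ((k : ℤ) + 1) * v k = #(prefixZeros v) := by
  rw [sum_succ_mul_eq_sum_sub_prefixSum, hv.sum_eq_one, prefixZeros, ← sum_boole]
  refine sum_congr rfl fun t _ => ?_
  rcases hv.prefixSum_eq_zero_or_one t with h | h <;> simp [h]

-- The prefix sums vanish at every `t ≤ k₁` and right after each entry `-1`.
theorem min'_support_add_card_le (hv : AltLine v) (hS : (univ.filter (v · ≠ 0)).Nonempty) :
    ((univ.filter (v · ≠ 0)).min' hS : ℕ) + 1 + #(univ.filter (v · = -1)) ≤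
      #(prefixZeros v) := by
  set k₁ := (univ.filter (v · ≠ 0)).min' hS
  have hk₁ (s : Fin n) (hs : v s ≠ 0) : (k₁ : ℕ) ≤ s :=
    Fin.le_def.1 (min'_le _ s (by simpa using hs))
  have before : range (k₁ + 1) ⊆ prefixZeros v := fun t ht => by
    rw [mem_range] at ht
    refine mem_filter.2 ⟨mem_range.2 (by omega), prefixSum_eq_zero_of_le v fun s hs => ?_⟩
    have := hk₁ s hs
    omega
  have after : (univ.filter (v · = -1)).image (fun q : Fin n => (q : ℕ) + 1) ⊆
      prefixZeros v := by
    intro _ ht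
    obtain ⟨q, hq, rfl⟩ := mem_image.1 ht
    obtain ⟨-, h0, hlt⟩ := hv.prefixSum_of_eq_neg_one (mem_filter.1 hq).2
    exact mem_filter.2 ⟨mem_range.2 hlt, h0⟩
  have disj : Disjoint (range (k₁ + 1))
      ((univ.filter (v · = -1)).image (fun q : Fin n => (q : ℕ) + 1)) := by
    rw [disjoint_left]
    intro _ ht hq'
    obtain ⟨q, hq, rfl⟩ := mem_image.1 hq'
    have := hk₁ q (by rw [(mem_filter.1 hq).2]; norm_num)
    rw [mem_range] at ht
    omega
  have := card_le_card (union_subset before after)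
  rwa [card_union_of_disjoint disj, card_range,
    card_image_of_injective _ fun a b h => Fin.ext (Nat.succ_injective h)] at this

-- The prefix sums equal `1` at every `t > kₚ` and right before each entry `-1`, so these `t`
-- are missing from `prefixZeros v`.
theorem card_prefixZeros_add_card_le (hv : AltLine v) (hS : (univ.filter (v · ≠ 0)).Nonempty) :
    #(prefixZeros v) + #(univ.filter (v · = -1)) ≤
      ((univ.filter (v · ≠ 0)).max' hS : ℕ) + 1 := by
  set kₚ := (univ.filter (v · ≠ 0)).max' hS
  have hkₚ (s : Fin n) (hs : v s ≠ 0) : (s : ℕ) ≤ kₚ :=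
    Fin.le_def.1 (le_max' _ s (by simpa using hs))
  have after : Ico ((kₚ : ℕ) + 1) n ⊆ (range n).filter (prefixSum v · ≠ 0) := by
    intro t ht
    rw [mem_Ico] at ht
    refine mem_filter.2 ⟨mem_range.2 ht.2, ?_⟩
    rw [prefixSum_eq_sum_of_lt v fun s hs => by have := hkₚ s hs; omega, hv.sum_eq_one]
    exact one_ne_zero
  have before : (univ.filter (v · = -1)).image (fun q : Fin n => (q : ℕ)) ⊆
      (range n).filter (prefixSum v · ≠ 0) := by
    intro _ ht
    obtain ⟨q, hq, rfl⟩ := mem_image.1 ht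
    obtain ⟨h1, -⟩ := hv.prefixSum_of_eq_neg_one (mem_filter.1 hq).2
    exact mem_filter.2 ⟨mem_range.2 q.2, by rw [h1]; exact one_ne_zero⟩
  have disj : Disjoint (Ico ((kₚ : ℕ) + 1) n)
      ((univ.filter (v · = -1)).image (fun q : Fin n => (q : ℕ))) := by
    rw [disjoint_left]
    intro _ ht hq'
    obtain ⟨q, hq, rfl⟩ := mem_image.1 hq'
    have := hkₚ q (by rw [(mem_filter.1 hq).2]; norm_num)
    rw [mem_Ico] at ht
    omega
  have total : #(prefixZeros v) + #((range n).filter (prefixSum v · ≠ 0)) = n := by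
    rw [prefixZeros, card_filter_add_card_filter_not, card_range]
  have := card_le_card (union_subset after before)
  rw [card_union_of_disjoint disj, Nat.card_Ico, card_image_of_injective _ Fin.val_injective]
    at this
  have := kₚ.2
  omega

theorem eq_single_of_card_neg_eq_zero (hv : AltLine v) (hm : #(univ.filter (v · = -1)) = 0)
    {k : Fin n} (hk : v k ≠ 0) : v = Pi.single k 1 := by
  have hcard : #(univ.filter (v · ≠ 0)) = 1 := by rw [hv.card_support, hm]
  obtain ⟨a, ha⟩ := card_eq_one.1 hcard
  have hzero (j : Fin n) (hj : j ≠ k) : v j = 0 := by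
    by_contra h
    have hj' : j ∈ univ.filter (v · ≠ 0) := by simpa using h
    have hk' : k ∈ univ.filter (v · ≠ 0) := by simpa using hk
    rw [ha, mem_singleton] at hj' hk'
    exact hj (hj'.trans hk'.symm)
  have hvk : v k = 1 := by
    rw [← hv.sum_eq_one, sum_eq_single k (fun j _ => hzero j) (by simp)]
  funext j
  by_cases hj : j = k
  · subst hj; simp [hvk]
  · simp [hj, hzero j hj]

theorem eq_single_zero_of_sum_succ_mul_eq_one (hv : AltLine v) (hn : 0 < n)
    (h : ∑ k : Fin n, ((k : ℤ) + 1) * v k = 1) : v = Pi.single ⟨0, hn⟩ 1 := by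
  have hS := hv.support_nonempty
  have hlow := hv.min'_support_add_card_le hS
  have := hv.sum_succ_mul_eq_card_prefixZeros
  have hmin : (univ.filter (v · ≠ 0)).min' hS = ⟨0, hn⟩ := Fin.ext (by dsimp only; omega)
  rw [← hmin]
  exact hv.eq_single_of_card_neg_eq_zero (by omega) (by simpa using min'_mem _ hS)

theorem eq_single_last_of_sum_succ_mul_eq_self (hv : AltLine v) (hn : 0 < n)
    (h : ∑ k : Fin n, ((k : ℤ) + 1) * v k = n) : v = Pi.single ⟨n - 1, by omega⟩ 1 := by
  have hS := hv.support_nonempty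
  have hupp := hv.card_prefixZeros_add_card_le hS
  have := hv.sum_succ_mul_eq_card_prefixZeros
  have := ((univ.filter (v · ≠ 0)).max' hS).2
  have hmax : (univ.filter (v · ≠ 0)).max' hS = ⟨n - 1, by omega⟩ :=
    Fin.ext (by dsimp only; omega)
  rw [← hmax]
  exact hv.eq_single_of_card_neg_eq_zero (by omega) (by simpa using max'_mem _ hS)

end AltLine

theorem stmt5 {n : ℕ} (hn : 0 < n) (A : Fin n → Fin n → Fin n → ℤ)
    (hA : IsAshm A) (i j : Fin n) :
    (1 ≤ Lmat A i j ∧ Lmat A i j ≤ (n : ℤ)) ∧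
    (∀ hS : (nzSet A i j).Nonempty,
      ((((nzSet A i j).min' hS).1 + 1 + ((nzSet A i j).card - 1) / 2 : ℕ) : ℤ)
          ≤ Lmat A i j ∧
      Lmat A i j ≤
        ((((nzSet A i j).max' hS).1 + 1 : ℕ) : ℤ)
          - ((((nzSet A i j).card - 1) / 2 : ℕ) : ℤ)) ∧
    (Lmat A i j = 1 →
      A i j ⟨0, hn⟩ = 1 ∧ ∀ k : Fin n, k.1 ≠ 0 → A i j k = 0) ∧
    (Lmat A i j = (n : ℤ) →
      A i j ⟨n - 1, by omega⟩ = 1 ∧ ∀ k : Fin n, k.1 ≠ n - 1 → A i j k = 0) := by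
  unfold nzSet
  have hv : AltLine (A i j) := hA.2.2 i j
  have hL : Lmat A i j = #(prefixZeros (A i j)) := hv.sum_succ_mul_eq_card_prefixZeros
  have hhalf : (#(univ.filter (A i j · ≠ 0)) - 1) / 2 = #(univ.filter (A i j · = -1)) := by
    rw [hv.card_support]; omega
  refine ⟨?_, fun hS => ?_, fun h => ?_, fun h => ?_⟩
  · have hS := hv.support_nonempty
    have := hv.min'_support_add_card_le hS
    have := hv.card_prefixZeros_add_card_le hS
    have := ((univ.filter (A i j · ≠ 0)).max' hS).2
    omega
  · have := hv.min'_support_add_card_le hS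
    have := hv.card_prefixZeros_add_card_le hS
    rw [hhalf]
    omega
  · rw [hv.eq_single_zero_of_sum_succ_mul_eq_one hn h]
    simp [Pi.single_apply, Fin.ext_iff]
  · rw [hv.eq_single_last_of_sum_succ_mul_eq_self hn h]
    simp [Pi.single_apply, Fin.ext_iff]
end

section
/- Let B be an n×n ASM and z_n = (n, n−1, …, 1). Then the vector w = B·z_n is majorized by z_n: for every k ≤ n, the sum of the k largest components of w is at most n + (n−1) + … + (n−k+1), with equality of total sums. Consequently, every row and column of the ASHM-Latin square L(A) of an n×n×n ASHM A is majorized by (n, n−1, …, 1). -/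
/-!
Summation by parts writes `(B z_n)_i = ∑_k ∑_{j ≤ k} B i j`. For each `k` the prefix sums
`∑_{j ≤ k} B i j` form a (0,1)-column with exactly `k + 1` ones, so over a set `S` of rows they
contribute at most `min (|S|, k + 1)`, and `∑_k min (|S|, k + 1) = n + (n - 1) + ⋯ + (n - |S| + 1)`.
Every row slice `(j, k) ↦ A i j k` and column slice `(i, k) ↦ A i j k` of an ASHM is an ASM, and
reversing its columns turns the weights `k + 1` of `L(A)` into the weights `n - k` of `z_n`.
-/

open Finset

namespace AltLine

variable {n : ℕ} {v : Fin n → ℤ}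

theorem sum_Iio_eq_zero_or_one (hv : AltLine v) (u : Fin n) :
    ∑ s ∈ Iio u, v s = 0 ∨ ∑ s ∈ Iio u, v s = 1 := by
  rcases u with ⟨_ | m, hm⟩
  · left
    exact sum_eq_zero fun s hs => by simp [Fin.lt_def] at hs
  · have hIio : Iio (⟨m + 1, hm⟩ : Fin n) = Iic ⟨m, by omega⟩ := by
      ext s; simp [Fin.lt_def, Fin.le_def]
    rw [hIio, ← filter_ge_eq_Iic]
    exact hv.1 _

theorem comp_rev (hv : AltLine v) : AltLine (fun s => v s.rev) := by
  refine ⟨fun t => ?_, (Fintype.sum_equiv Fin.revPerm _ _ fun _ => rfl).trans hv.2⟩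
  have hsuffix : ∑ s with s ≤ t, v s.rev = 1 - ∑ s ∈ Iio t.rev, v s := by
    rw [filter_ge_eq_Iic, ← hv.2, ← sum_filter_add_sum_filter_not univ (· < t.rev),
      filter_gt_eq_Iio, add_sub_cancel_left]
    have hIci : ({s | ¬s < t.rev} : Finset (Fin n)) = (Iic t).map Fin.revPerm.toEmbedding := by
      ext; simp [Fin.map_revPerm_Iic]
    rw [hIci, sum_map]
    rfl
  rcases hv.sum_Iio_eq_zero_or_one t.rev with h | h <;> simp [hsuffix, h]

end AltLine

theorem Fin.sum_mul_card_Ici_eq_sum_sum_Iic {R : Type*} [Semiring R] {n : ℕ} (v : Fin n → R) :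
    ∑ j, v j * ((n - j.1 : ℕ) : R) = ∑ k, ∑ j ∈ Iic k, v j := by
  rw [sum_comm' (t' := univ) (s' := Ici) fun k j => by simp]
  refine sum_congr rfl fun j _ => ?_
  rw [Finset.sum_const, Fin.card_Ici, nsmul_eq_mul']

theorem sum_le_min_card_sum {ι R : Type*} [Fintype ι] [Semiring R] [LinearOrder R]
    [IsOrderedRing R] {f : ι → R} (hf : ∀ i, f i = 0 ∨ f i = 1) (S : Finset ι) :
    ∑ i ∈ S, f i ≤ min (#S : R) (∑ i, f i) := by
  have hf0 : ∀ i, 0 ≤ f i := fun i => by rcases hf i with h | h <;> simp [h]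
  have hf1 : ∀ i, f i ≤ 1 := fun i => by rcases hf i with h | h <;> simp [h]
  refine le_min ?_ (sum_le_sum_of_subset_of_nonneg (subset_univ S) fun i _ _ => hf0 i)
  simpa using sum_le_sum fun i (_ : i ∈ S) => hf1 i

theorem Fin.sum_min_succ_eq_sum_range {n s : ℕ} (hs : s ≤ n) :
    ∑ k : Fin n, min (s : ℤ) (k.1 + 1) = ∑ t ∈ range s, ((n - t : ℕ) : ℤ) := by
  induction s with
  | zero => exact sum_eq_zero fun k _ => by omega
  | succ s ih =>
    have hstep : ∀ k : Fin n, min ((s + 1 : ℕ) : ℤ) (k.1 + 1)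
        = min (s : ℤ) (k.1 + 1) + if s ≤ k.1 then 1 else 0 := fun k => by
      split_ifs <;> omega
    have hcount : ∑ k : Fin n, (if s ≤ k.1 then (1 : ℤ) else 0) = ((n - s : ℕ) : ℤ) := by
      rw [Fin.sum_univ_eq_sum_range (fun k => if s ≤ k then (1 : ℤ) else 0), sum_boole,
        range_eq_Ico, Ico_filter_le_of_left_le s.zero_le, Nat.card_Ico]
    rw [sum_congr rfl fun k _ => hstep k, sum_add_distrib, ih (by omega), hcount, sum_range_succ]

/-- Majorization by `z_n = (n, n-1, …, 1)`: since `z_n` is decreasing, its `k` largest entries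
sum to `∑ t < k, (n - t)`, and bounding the `k` largest entries of `w` amounts to bounding
every `k`-element subsum. -/
def IsMajorizedByZ {n : ℕ} (w : Fin n → ℤ) : Prop :=
  (∀ S : Finset (Fin n), ∑ i ∈ S, w i ≤ ∑ t ∈ range #S, ((n - t : ℕ) : ℤ)) ∧
    ∑ i, w i = ∑ t ∈ range n, ((n - t : ℕ) : ℤ)

namespace IsAsm

variable {n : ℕ} {B : Matrix (Fin n) (Fin n) ℤ}

theorem sum_Iic_eq_zero_or_one (hB : IsAsm B) (i k : Fin n) :
    ∑ j ∈ Iic k, B i j = 0 ∨ ∑ j ∈ Iic k, B i j = 1 := by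
  rw [← filter_ge_eq_Iic]
  exact (hB.1 i).1 k

theorem sum_sum_Iic (hB : IsAsm B) (k : Fin n) : ∑ i, ∑ j ∈ Iic k, B i j = k.1 + 1 := by
  refine sum_comm.trans ?_
  rw [sum_congr rfl fun j _ => (hB.2 j).2, sum_const, Fin.card_Iic]
  simp

theorem isMajorizedByZ (hB : IsAsm B) :
    IsMajorizedByZ fun i => ∑ j, B i j * ((n - j.1 : ℕ) : ℤ) := by
  refine ⟨fun S => ?_, ?_⟩
  · calc ∑ i ∈ S, ∑ j, B i j * ((n - j.1 : ℕ) : ℤ)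
        = ∑ k, ∑ i ∈ S, ∑ j ∈ Iic k, B i j := by
          simp only [Fin.sum_mul_card_Ici_eq_sum_sum_Iic]
          exact sum_comm
      _ ≤ ∑ k : Fin n, min (#S : ℤ) (k.1 + 1) := sum_le_sum fun k _ => by
          simpa only [hB.sum_sum_Iic k] using
            sum_le_min_card_sum (fun i => hB.sum_Iic_eq_zero_or_one i k) S
      _ = ∑ t ∈ range #S, ((n - t : ℕ) : ℤ) :=
          Fin.sum_min_succ_eq_sum_range (card_le_univ S |>.trans_eq (Fintype.card_fin n))
  · rw [sum_comm]
    simp only [← sum_mul, fun j => (hB.2 j).2, one_mul]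
    exact Fin.sum_univ_eq_sum_range (fun t => ((n - t : ℕ) : ℤ)) n

end IsAsm

theorem Fin.sum_succ_mul_eq_sum_rev_mul {R : Type*} [CommSemiring R] {n : ℕ} (w : Fin n → R) :
    ∑ k : Fin n, ((k.1 : R) + 1) * w k = ∑ k : Fin n, w k.rev * ((n - k.1 : ℕ) : R) := by
  refine Fintype.sum_equiv Fin.revPerm _ _ fun k => ?_
  have hk : k.1 + 1 = n - k.rev.1 := by rw [Fin.val_rev]; omega
  rw [Fin.revPerm_apply, Fin.rev_rev, mul_comm, ← Nat.cast_add_one, hk]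

namespace IsAshm

variable {n : ℕ} {A : Fin n → Fin n → Fin n → ℤ}

theorem isMajorizedByZ_row (hA : IsAshm A) (i : Fin n) :
    IsMajorizedByZ fun j => Lmat A i j := by
  have hslice : IsAsm (Matrix.of fun j k => A i j k.rev) :=
    ⟨fun j => (hA.2.2 i j).comp_rev, fun k => hA.2.1 i k.rev⟩
  simpa only [Lmat, Fin.sum_succ_mul_eq_sum_rev_mul, Matrix.of_apply] using hslice.isMajorizedByZ

theorem isMajorizedByZ_col (hA : IsAshm A) (j : Fin n) :
    IsMajorizedByZ fun i => Lmat A i j := by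
  have hslice : IsAsm (Matrix.of fun i k => A i j k.rev) :=
    ⟨fun i => (hA.2.2 i j).comp_rev, fun k => hA.1 j k.rev⟩
  simpa only [Lmat, Fin.sum_succ_mul_eq_sum_rev_mul, Matrix.of_apply] using hslice.isMajorizedByZ

end IsAshm

theorem stmt7 {n : ℕ} (B : Matrix (Fin n) (Fin n) ℤ) (hB : IsAsm B)
    (A : Fin n → Fin n → Fin n → ℤ) (hA : IsAshm A) :
    (∀ S : Finset (Fin n),
        (∑ i ∈ S, ∑ j : Fin n, B i j * ((n - j.1 : ℕ) : ℤ))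
          ≤ ∑ t ∈ Finset.range S.card, ((n - t : ℕ) : ℤ)) ∧
    ((∑ i : Fin n, ∑ j : Fin n, B i j * ((n - j.1 : ℕ) : ℤ))
        = ∑ t ∈ Finset.range n, ((n - t : ℕ) : ℤ)) ∧
    (∀ i : Fin n, ∀ S : Finset (Fin n),
        (∑ j ∈ S, Lmat A i j) ≤ ∑ t ∈ Finset.range S.card, ((n - t : ℕ) : ℤ)) ∧
    (∀ i : Fin n, (∑ j : Fin n, Lmat A i j) = ∑ t ∈ Finset.range n, ((n - t : ℕ) : ℤ)) ∧
    (∀ j : Fin n, ∀ S : Finset (Fin n),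
        (∑ i ∈ S, Lmat A i j) ≤ ∑ t ∈ Finset.range S.card, ((n - t : ℕ) : ℤ)) ∧
    (∀ j : Fin n, (∑ i : Fin n, Lmat A i j) = ∑ t ∈ Finset.range n, ((n - t : ℕ) : ℤ)) := by
  obtain ⟨hle, heq⟩ := hB.isMajorizedByZ
  exact ⟨hle, heq, fun i => (hA.isMajorizedByZ_row i).1, fun i => (hA.isMajorizedByZ_row i).2,
    fun j => (hA.isMajorizedByZ_col j).1, fun j => (hA.isMajorizedByZ_col j).2⟩
end

section
/- Let n > 3 and let A be an n×n×n ASHM in which every line contains at most one −1 (a near-permutation hypermatrix). Then the ASHM-Latin square L(A) has no constant line. -/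
open Finset

/-! Suppose row `i` of `L(A)` is constant `c`, and consider the slice `B j k = A i j k`: its rows
are lines in the `k`-direction, with `∑ (k + 1) B j k = c`, and its columns alternate. The first
entry of an alternating line is nonnegative, so the first row of `B` is a unit vector `e_q` with
`q + 1 = c`. The second row has a negative entry: otherwise it would be a unit vector with the same
weighted sum, i.e. `e_q` again, and column `q` would start `1, 1`. Since `B 0 b + B 1 b ∈ {0, 1}`,
that entry lies in column `q` and equals `-1`. Reading the columns backwards (they still alternate)
gives a second `-1` in column `q`, in row `n - 2`, which differs from row `1` once `n > 3`. -/
lemma exists_eq_single_of_nonneg_of_sum_eq_one {ι : Type*} [Fintype ι] [DecidableEq ι]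
    {v : ι → ℤ} (hv : ∀ i, 0 ≤ v i) (hsum : ∑ i, v i = 1) : ∃ q, v = Pi.single q 1 := by
  obtain ⟨q, hq⟩ : ∃ q, v q ≠ 0 := by
    by_contra! h
    simp [sum_eq_zero fun i _ => h i] at hsum
  have hrest : ∑ i ∈ univ.erase q, v i = 1 - v q := by
    rw [← hsum, ← add_sum_erase _ v (mem_univ q)]; ring
  have hrest_nonneg : 0 ≤ ∑ i ∈ univ.erase q, v i := sum_nonneg fun i _ => hv i
  have hvq : v q = 1 := by have := hv q; omega
  refine ⟨q, funext fun i => ?_⟩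
  rcases eq_or_ne i q with rfl | hi
  · simp [hvq]
  · rw [Pi.single_eq_of_ne hi]
    rw [hvq, sub_self] at hrest
    exact (sum_eq_zero_iff_of_nonneg fun i _ => hv i).1 hrest i (mem_erase.2 ⟨hi, mem_univ i⟩)

lemma sum_succ_mul_single {n : ℕ} (q : Fin n) :
    ∑ k : Fin n, ((k.1 : ℤ) + 1) * (Pi.single q 1 : Fin n → ℤ) k = (q.1 : ℤ) + 1 := by
  simp [Pi.single_apply]

namespace AltLine

variable {n : ℕ} {v : Fin n → ℤ}

lemma sum_lt (hv : AltLine v) (t : Fin n) :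
    (∑ s ∈ univ.filter (· < t), v s) = 0 ∨ (∑ s ∈ univ.filter (· < t), v s) = 1 := by
  rcases Nat.eq_zero_or_pos t.1 with ht | ht
  · left
    apply sum_eq_zero
    intro s hs
    simp only [mem_filter, mem_univ, true_and, Fin.lt_def] at hs
    omega
  · have hpred : univ.filter (· < t) = univ.filter (· ≤ (⟨t.1 - 1, by omega⟩ : Fin n)) := by
      ext s
      simp only [mem_filter, mem_univ, true_and, Fin.lt_def, Fin.le_def]
      omega
    rw [hpred]
    exact hv.1 _

lemma rev (hv : AltLine v) : AltLine fun s => v s.rev := by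
  refine ⟨fun t => ?_, ?_⟩
  · have hreindex : ∑ s ∈ univ.filter (· ≤ t), v s.rev = ∑ u ∈ univ.filter (t.rev ≤ ·), v u :=
      sum_equiv Fin.revPerm (by simp) (by simp)
    have hsplit := sum_filter_add_sum_filter_not univ (· < t.rev) v
    simp only [not_lt, hv.2] at hsplit
    rw [hreindex]
    rcases hv.sum_lt t.rev with h | h <;> omega
  · rw [← hv.2]
    exact Equiv.sum_comp Fin.revPerm v

lemma zero_nonneg {m : ℕ} {v : Fin (m + 1) → ℤ} (hv : AltLine v) : 0 ≤ v 0 := by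
  have hsingle : univ.filter (· ≤ (0 : Fin (m + 1))) = {0} := by
    ext s; simp
  have h := hv.1 0
  rw [hsingle, sum_singleton] at h
  omega

lemma zero_add_one_mem {m : ℕ} {v : Fin (m + 2) → ℤ} (hv : AltLine v) :
    0 ≤ v 0 + v 1 ∧ v 0 + v 1 ≤ 1 := by
  have hpair : univ.filter (· ≤ (1 : Fin (m + 2))) = {0, 1} := by
    ext s
    simp only [mem_filter, mem_univ, true_and, mem_insert, mem_singleton, Fin.le_def,
      Fin.ext_iff, Fin.val_zero, Fin.val_one]
    omega
  have h := hv.1 1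
  rw [hpair, sum_pair (by simp)] at h
  omega

end AltLine

lemma exists_eq_neg_one_of_sum_mul_eq {m l : ℕ} {B : Fin (m + 2) → Fin l → ℤ} {c : ℤ}
    (hrow : ∀ i, ∑ k, B i k = 1) (hcol : ∀ k, AltLine fun i => B i k)
    (hc : ∀ i, ∑ k, ((k.1 : ℤ) + 1) * B i k = c) :
    ∃ q : Fin l, (q.1 : ℤ) + 1 = c ∧ B 1 q = -1 := by
  obtain ⟨q, hq⟩ :=
    exists_eq_single_of_nonneg_of_sum_eq_one (fun k => (hcol k).zero_nonneg) (hrow 0)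
  have hcq : (q.1 : ℤ) + 1 = c := by rw [← hc 0, hq, sum_succ_mul_single]
  refine ⟨q, hcq, ?_⟩
  have hpair := (hcol q).zero_add_one_mem
  rw [hq, Pi.single_eq_same] at hpair
  by_cases hneg : ∃ b, B 1 b < 0
  · obtain ⟨b, hb⟩ := hneg
    obtain rfl : b = q := by
      by_contra hbq
      have hpair_b := (hcol b).zero_add_one_mem
      rw [hq, Pi.single_eq_of_ne hbq] at hpair_b
      omega
    omega
  · push Not at hneg
    obtain ⟨p, hp⟩ := exists_eq_single_of_nonneg_of_sum_eq_one hneg (hrow 1)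
    obtain rfl : p = q := by
      have hcp := hc 1
      rw [hp, sum_succ_mul_single] at hcp
      exact Fin.ext (by omega)
    rw [hp, Pi.single_eq_same] at hpair
    omega

lemma not_forall_sum_mul_eq {m l : ℕ} {B : Fin (m + 4) → Fin l → ℤ}
    (hrow : ∀ i, ∑ k, B i k = 1) (hcol : ∀ k, AltLine fun i => B i k)
    (hnear : ∀ k, (univ.filter fun i => B i k = -1).card ≤ 1) (c : ℤ) :
    ¬ ∀ i, ∑ k, ((k.1 : ℤ) + 1) * B i k = c := by
  intro hc
  obtain ⟨q, hcq, htop⟩ := exists_eq_neg_one_of_sum_mul_eq hrow hcol hc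
  obtain ⟨q', hcq', hbot⟩ := exists_eq_neg_one_of_sum_mul_eq (B := fun i => B i.rev)
    (fun i => hrow _) (fun k => (hcol k).rev) (fun i => hc _)
  rw [show q' = q from Fin.ext (by omega)] at hbot
  have htwo : 1 < (univ.filter fun i => B i q = -1).card :=
    one_lt_card.2 ⟨1, by simpa using htop, Fin.rev 1, by simpa using hbot,
      by simp [Fin.ext_iff]⟩
  exact absurd (hnear q) (not_le.2 htwo)

theorem stmt9_general {n : ℕ} (hn : 3 < n) (A : Fin n → Fin n → Fin n → ℤ) (hA : IsAshm A)
    (hnear1 : ∀ j k : Fin n, (Finset.univ.filter (fun i : Fin n => A i j k = -1)).card ≤ 1)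
    (hnear2 : ∀ i k : Fin n, (Finset.univ.filter (fun j : Fin n => A i j k = -1)).card ≤ 1) :
    (∀ i : Fin n, ¬ ∃ c : ℤ, ∀ j : Fin n, Lmat A i j = c) ∧
    (∀ j : Fin n, ¬ ∃ c : ℤ, ∀ i : Fin n, Lmat A i j = c) := by
  obtain ⟨m, rfl⟩ : ∃ m, n = m + 4 := ⟨n - 4, by omega⟩
  obtain ⟨hA₁, hA₂, hA₃⟩ := hA
  exact ⟨fun i ⟨c, hc⟩ => not_forall_sum_mul_eq (fun j => (hA₃ i j).2) (hA₂ i) (hnear2 i) c hc,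
    fun j ⟨c, hc⟩ => not_forall_sum_mul_eq (fun i => (hA₃ i j).2) (hA₁ j) (hnear1 j) c hc⟩

theorem stmt9 {n : ℕ} (hn : 3 < n) (A : Fin n → Fin n → Fin n → ℤ) (hA : IsAshm A)
    (hnear1 : ∀ j k : Fin n, (Finset.univ.filter (fun i : Fin n => A i j k = -1)).card ≤ 1)
    (hnear2 : ∀ i k : Fin n, (Finset.univ.filter (fun j : Fin n => A i j k = -1)).card ≤ 1)
    (hnear3 : ∀ i j : Fin n, (Finset.univ.filter (fun k : Fin n => A i j k = -1)).card ≤ 1) :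
    (∀ i : Fin n, ¬ ∃ c : ℤ, ∀ j : Fin n, Lmat A i j = c) ∧
    (∀ j : Fin n, ¬ ∃ c : ℤ, ∀ i : Fin n, Lmat A i j = c) :=
  stmt9_general hn A hA hnear1 hnear2
end

section
/- Let A be an n×n ASM and P an n×n permutation matrix such that z_nᵀA = z_nᵀP, where z_n = (n, n−1, …, 1). Then A = P. In particular, if the weighted vertical projection z_nᵀA of an ASM A is a permutation of (1, 2, …, n), then A is a permutation matrix. -/
/-!
The partial column sums `S t j = ∑_{i ≤ t} A i j` of an ASM are `0` or `1`; row `t` of `S`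
sums to `t + 1` and column `j` of `S` sums to `(zₙᵀ A)_j`. For the permutation matrix of `σ`,
`S` is the threshold matrix `[σ⁻¹ j ≤ t]`, so `zₙᵀ A = zₙᵀ P` says that the two `S`'s have the
same line sums. A `[0,1]`-matrix with the line sums of a threshold matrix `[g j ≤ f i]` equals it:
its difference `E` from the threshold matrix has vanishing line sums, hence is orthogonal to the
separable weight `2 (f i - g j) + 1`, while every term `E i j * (2 (f i - g j) + 1)` is `≤ 0` and
the weight is odd. Finally `A` is recovered from its partial column sums.
-/

open Finset

open Equiv

section ThresholdMatrix

variable {ι κ : Type*} [Fintype ι] [Fintype κ]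

theorem eq_threshold_of_line_sums_eq (f : ι → ℤ) (g : κ → ℤ) (S : ι → κ → ℤ)
    (hS : ∀ i j, 0 ≤ S i j ∧ S i j ≤ 1)
    (hrow : ∀ i, ∑ j, S i j = ∑ j, if g j ≤ f i then 1 else 0)
    (hcol : ∀ j, ∑ i, S i j = ∑ i, if g j ≤ f i then 1 else 0) (i : ι) (j : κ) :
    S i j = if g j ≤ f i then 1 else 0 := by
  set E : ι → κ → ℤ := fun i j => S i j - if g j ≤ f i then 1 else 0
  have hE_nonpos : ∀ i j, E i j * (2 * (f i - g j) + 1) ≤ 0 := by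
    intro i j
    have := hS i j
    by_cases h : g j ≤ f i <;> simp only [E, h, if_true, if_false] <;> nlinarith
  have hE_row : ∀ i, ∑ j, E i j = 0 := fun i => by simp [E, Finset.sum_sub_distrib, hrow]
  have hE_col : ∀ j, ∑ i, E i j = 0 := fun j => by simp [E, Finset.sum_sub_distrib, hcol]
  have hE_total : ∑ i, ∑ j, E i j * (2 * (f i - g j) + 1) = 0 := by
    have : ∀ i j, E i j * (2 * (f i - g j) + 1) = (2 * f i + 1) * E i j - 2 * (g j * E i j) := by
      intros; ring
    simp only [this, Finset.sum_sub_distrib, ← Finset.mul_sum]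
    rw [Finset.sum_comm]
    simp [← Finset.mul_sum, hE_row, hE_col]
  have hE_zero : E i j * (2 * (f i - g j) + 1) = 0 := by
    rw [Finset.sum_eq_zero_iff_of_nonpos (fun i _ => Finset.sum_nonpos fun j _ => hE_nonpos i j)]
      at hE_total
    exact (Finset.sum_eq_zero_iff_of_nonpos (fun j _ => hE_nonpos i j)).1
      (hE_total i (Finset.mem_univ _)) j (Finset.mem_univ _)
  have hodd : 2 * (f i - g j) + 1 ≠ 0 := by omega
  simpa only [E, sub_eq_zero] using (mul_eq_zero.1 hE_zero).resolve_right hodd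

end ThresholdMatrix

section ColPrefixSum

variable {ι κ R : Type*} [LinearOrder ι] [LocallyFiniteOrderBot ι]

def colPrefixSum [AddCommMonoid R] (A : Matrix ι κ R) (t : ι) (j : κ) : R :=
  ∑ i ∈ Iic t, A i j

theorem sum_colPrefixSum_of_rowSum_eq_one [Fintype κ] [NonAssocSemiring R] {A : Matrix ι κ R}
    (hA : ∀ i, ∑ j, A i j = 1) (t : ι) : ∑ j, colPrefixSum A t j = #(Iic t) := by
  simp only [colPrefixSum]
  rw [Finset.sum_comm]
  simp [hA]

theorem sum_colPrefixSum [Fintype ι] [LocallyFiniteOrderTop ι] [AddCommMonoid R]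
    (A : Matrix ι κ R) (j : κ) : ∑ t, colPrefixSum A t j = ∑ i, #(Ici i) • A i j := by
  simp only [colPrefixSum, ← Finset.sum_const]
  exact Finset.sum_comm' (by simp)

theorem eq_of_colPrefixSum_eq [WellFoundedLT ι] [AddCommGroup R] {A B : Matrix ι κ R}
    (h : ∀ t j, colPrefixSum A t j = colPrefixSum B t j) : A = B := by
  ext t j
  induction t using WellFoundedLT.induction with
  | _ t ih =>
    have hlt : ∑ i ∈ Iio t, A i j = ∑ i ∈ Iio t, B i j :=
      Finset.sum_congr rfl fun i hi => ih i (Finset.mem_Iio.1 hi)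
    have := h t j
    simp only [colPrefixSum, ← Finset.Iio_insert, Finset.sum_insert Finset.notMem_Iio_self, hlt]
      at this
    exact add_right_cancel this

theorem colPrefixSum_perm [NonAssocSemiring R] (σ : Perm ι) (t j : ι) :
    colPrefixSum (fun i j => if σ i = j then (1 : R) else 0) t j
      = if σ.symm j ≤ t then 1 else 0 := by
  simp [colPrefixSum, ← Equiv.eq_symm_apply]

end ColPrefixSum

theorem IsAsm.colPrefixSum_eq_zero_or_one {n : ℕ} {A : Matrix (Fin n) (Fin n) ℤ} (hA : IsAsm A)
    (t j : Fin n) : colPrefixSum A t j = 0 ∨ colPrefixSum A t j = 1 := by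
  simpa [colPrefixSum, Finset.filter_ge_eq_Iic] using (hA.2 j).1 t

theorem sum_mul_ite_perm_apply_eq {α R : Type*} [Fintype α] [DecidableEq α] [NonAssocSemiring R]
    (σ : Perm α) (c : α → R) (j : α) :
    ∑ i, c i * (if σ i = j then 1 else 0) = c (σ.symm j) := by
  simp [← Equiv.eq_symm_apply]

theorem IsAsm.eq_of_weightedColSum_eq {n : ℕ} {A : Matrix (Fin n) (Fin n) ℤ} (hA : IsAsm A)
    (σ : Perm (Fin n))
    (h : ∀ j, ∑ i : Fin n, ((n - i.1 : ℕ) : ℤ) * A i j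
      = ∑ i : Fin n, ((n - i.1 : ℕ) : ℤ) * (if σ i = j then 1 else 0)) (i j : Fin n) :
    A i j = if σ i = j then 1 else 0 := by
  set P : Matrix (Fin n) (Fin n) ℤ := fun i j => if σ i = j then 1 else 0
  have hP : ∀ t j, colPrefixSum P t j = if ((σ.symm j : ℕ) : ℤ) ≤ (t : ℕ) then 1 else 0 := by
    intro t j
    simp only [P, colPrefixSum_perm, Nat.cast_le, Fin.val_fin_le]
  have hA01 : ∀ t j, 0 ≤ colPrefixSum A t j ∧ colPrefixSum A t j ≤ 1 := fun t j => by
    rcases hA.colPrefixSum_eq_zero_or_one t j with h | h <;> omega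
  have hweight (B : Matrix (Fin n) (Fin n) ℤ) (j : Fin n) :
      ∑ i : Fin n, ((n - i.1 : ℕ) : ℤ) * B i j = ∑ t, colPrefixSum B t j := by
    simp [sum_colPrefixSum, Fin.card_Ici]
  suffices ∀ t j, colPrefixSum A t j = colPrefixSum P t j from
    congrFun₂ (eq_of_colPrefixSum_eq this) i j
  simp only [hP]
  apply eq_threshold_of_line_sums_eq _ _ _ hA01
  · intro t
    rw [← funext (hP t), sum_colPrefixSum_of_rowSum_eq_one (fun i => (hA.1 i).2),
      sum_colPrefixSum_of_rowSum_eq_one (by simp [P])]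
  · intro j
    simp only [← hP, ← hweight]
    exact h j

theorem stmt10 {n : ℕ} (A : Matrix (Fin n) (Fin n) ℤ) (hA : IsAsm A) :
    (∀ σ : Equiv.Perm (Fin n),
      (∀ j : Fin n,
          (∑ i : Fin n, ((n - i.1 : ℕ) : ℤ) * A i j)
            = ∑ i : Fin n, ((n - i.1 : ℕ) : ℤ) * (if σ i = j then (1 : ℤ) else 0)) →
      ∀ i j : Fin n, A i j = if σ i = j then (1 : ℤ) else 0) ∧
    ((∃ τ : Equiv.Perm (Fin n), ∀ j : Fin n,
          (∑ i : Fin n, ((n - i.1 : ℕ) : ℤ) * A i j) = ((τ j).1 : ℤ) + 1) →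
      ∃ σ : Equiv.Perm (Fin n), ∀ i j : Fin n,
        A i j = if σ i = j then (1 : ℤ) else 0) := by
  refine ⟨hA.eq_of_weightedColSum_eq, ?_⟩
  rintro ⟨τ, hτ⟩
  refine ⟨(τ.trans Fin.revPerm).symm, hA.eq_of_weightedColSum_eq _ fun j => ?_⟩
  rw [hτ j, sum_mul_ite_perm_apply_eq]
  simp only [symm_symm, trans_apply, Fin.revPerm_apply, Fin.val_rev]
  omega
end

section
/- Let k < n and let A_1, …, A_k be n×n ASMs such that for all i, j, the partial vertical line (a_{ij1}, …, a_{ijk}) is (1,*)-alternating. Then there exist n×n permutation matrices A_{k+1}, …, A_n such that [A_1, …, A_k, A_{k+1}, …, A_n] is an n×n×n ASHM. -/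
open Finset

/-! Let `S` be the sum of the first `k` planes. Since the vertical partial sums are `0` or `1`,
`S` is a `(0,1)`-matrix, and since the planes are ASMs, all its line sums are `k`. For `k < n`
the matrix `J - S` is nonnegative with positive constant line sums, so by Hall's theorem it
dominates a permutation matrix `P`; taking `P` as the next plane keeps every vertical partial
sum in `{0, 1}`. Once all `n` planes are filled, every full vertical sum is at most `1`, while
the vertical sums over a column of the cube add up to `n`; hence they all equal `1`. -/

section Hall

variable {ι R : Type*} [Fintype ι] [DecidableEq ι]

lemma Matrix.exists_perm_forall_pos_of_sum_eq [Semiring R] [LinearOrder R]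
    [IsStrictOrderedRing R] (M : Matrix ι ι R) (hM : ∀ i j, 0 ≤ M i j) {c : R} (hc : 0 < c)
    (hrow : ∀ i, ∑ j, M i j = c) (hcol : ∀ j, ∑ i, M i j = c) :
    ∃ σ : Equiv.Perm ι, ∀ i, 0 < M i (σ i) := by
  set t : ι → Finset ι := fun i => univ.filter (fun j => 0 < M i j)
  have hall : ∀ s : Finset ι, #s ≤ #(s.biUnion t) := by
    intro s
    have key : (#s : R) * c ≤ #(s.biUnion t) * c := calc
      (#s : R) * c = ∑ i ∈ s, ∑ j ∈ t i, M i j := by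
          rw [← nsmul_eq_mul, ← sum_const]
          refine sum_congr rfl fun i _ => ?_
          rw [← hrow i, sum_filter_of_ne]
          exact fun j _ hj => lt_of_le_of_ne (hM i j) (Ne.symm hj)
      _ ≤ ∑ i ∈ s, ∑ j ∈ s.biUnion t, M i j :=
          sum_le_sum fun i hi => sum_le_sum_of_subset_of_nonneg (subset_biUnion_of_mem t hi)
            fun j _ _ => hM i j
      _ = ∑ j ∈ s.biUnion t, ∑ i ∈ s, M i j := sum_comm
      _ ≤ ∑ j ∈ s.biUnion t, c :=
          sum_le_sum fun j _ => hcol j ▸ sum_le_sum_of_subset_of_nonneg (subset_univ s)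
            fun i _ _ => hM i j
      _ = #(s.biUnion t) * c := by rw [sum_const, nsmul_eq_mul]
    exact_mod_cast le_of_mul_le_mul_right key hc
  obtain ⟨f, hf, hft⟩ := (all_card_le_biUnion_card_iff_exists_injective t).mp hall
  exact ⟨Equiv.ofBijective f hf.bijective_of_finite, fun i => (mem_filter.mp (hft i)).2⟩

lemma Matrix.exists_perm_forall_lt_one_of_sum_eq [Ring R] [LinearOrder R]
    [IsStrictOrderedRing R] (S : Matrix ι ι R) (hS : ∀ i j, S i j ≤ 1) {c : R}
    (hc : c < Fintype.card ι) (hrow : ∀ i, ∑ j, S i j = c) (hcol : ∀ j, ∑ i, S i j = c) :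
    ∃ σ : Equiv.Perm ι, ∀ i, S i (σ i) < 1 := by
  have hsum {f : ι → R} (hf : ∑ i, f i = c) : ∑ i, (1 - f i) = Fintype.card ι - c := by
    rw [sum_sub_distrib, hf, sum_const, card_univ, nsmul_one]
  obtain ⟨σ, hσ⟩ := exists_perm_forall_pos_of_sum_eq (fun i j => 1 - S i j)
    (fun i j => sub_nonneg.mpr (hS i j)) (sub_pos.mpr hc) (fun i => hsum (hrow i))
    (fun j => hsum (hcol j))
  exact ⟨σ, fun i => sub_pos.mp (hσ i)⟩

end Hall

section Hypermatrix

variable {n : ℕ}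

lemma altLine_indicator (j₀ : Fin n) : AltLine (fun j => if j₀ = j then (1 : ℤ) else 0) := by
  refine ⟨fun t => ?_, by simp⟩
  rw [sum_ite_eq]
  split_ifs <;> simp

lemma isAsm_perm (σ : Equiv.Perm (Fin n)) : IsAsm (fun i j => if σ i = j then (1 : ℤ) else 0) := by
  refine ⟨fun i => altLine_indicator (σ i), fun j => ?_⟩
  convert altLine_indicator (σ.symm j) using 3
  rw [Equiv.symm_apply_eq, eq_comm]

def headSum (v : Fin n → ℤ) (k : ℕ) : ℤ :=
  ∑ s ∈ univ.filter (fun s : Fin n => s.1 < k), v s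

lemma sum_filter_le_eq_headSum (v : Fin n → ℤ) (t : Fin n) :
    ∑ s ∈ univ.filter (fun s => s ≤ t), v s = headSum v (t.1 + 1) := by
  simp only [headSum, Fin.le_def, Nat.lt_succ_iff]

lemma headSum_zero (v : Fin n → ℤ) : headSum v 0 = 0 := by
  simp [headSum]

lemma headSum_succ (v : Fin n → ℤ) {k : ℕ} (hk : k < n) :
    headSum v (k + 1) = headSum v k + v ⟨k, hk⟩ := by
  have : univ.filter (fun s : Fin n => s.1 < k + 1) =
      insert ⟨k, hk⟩ (univ.filter (fun s : Fin n => s.1 < k)) := by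
    ext s; simp [Fin.ext_iff]; omega
  rw [headSum, this, sum_insert (by simp), add_comm, headSum]

lemma headSum_congr {v w : Fin n → ℤ} {k : ℕ} (h : ∀ s : Fin n, s.1 < k → v s = w s) :
    headSum v k = headSum w k :=
  sum_congr rfl fun s hs => h s (mem_filter.mp hs).2

lemma headSum_mem_of_forall_lt {v : Fin n → ℤ} {k m : ℕ}
    (hv : ∀ t : Fin n, t.1 < k → headSum v (t.1 + 1) = 0 ∨ headSum v (t.1 + 1) = 1)
    (hmk : m ≤ k) (hmn : m ≤ n) : headSum v m = 0 ∨ headSum v m = 1 := by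
  rcases m with _ | m
  · exact .inl (headSum_zero v)
  · exact hv ⟨m, hmn⟩ hmk

lemma sum_headSum_of_sum_eq_one {ι : Type*} [Fintype ι] (A : ι → Fin n → ℤ) {k : ℕ}
    (hA : ∀ s : Fin n, s.1 < k → ∑ i, A i s = 1) : ∑ i, headSum (A i) k = min n k := by
  simp only [headSum]
  rw [sum_comm, sum_congr rfl fun s hs => hA s (mem_filter.mp hs).2, sum_const,
    Fin.card_filter_val_lt, nsmul_one]

lemma exists_perm_headSum_eq_zero {A : Fin n → Fin n → Fin n → ℤ} {k : ℕ} (hk : k < n)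
    (hASM : ∀ s : Fin n, s.1 < k → IsAsm (fun i j => A i j s))
    (halt : ∀ i j t : Fin n, t.1 < k →
      headSum (A i j) (t.1 + 1) = 0 ∨ headSum (A i j) (t.1 + 1) = 1) :
    ∃ σ : Equiv.Perm (Fin n), ∀ i, headSum (A i (σ i)) k = 0 := by
  have h01 i j := headSum_mem_of_forall_lt (halt i j) le_rfl hk.le
  have hsum : min n k = (k : ℤ) := by rw [min_eq_right hk.le]
  obtain ⟨σ, hσ⟩ := Matrix.exists_perm_forall_lt_one_of_sum_eq (fun i j => headSum (A i j) k)
    (fun i j => by rcases h01 i j with h | h <;> simp [h]) (c := k) (by simpa using hk)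
    (fun i => by rw [← hsum]; exact sum_headSum_of_sum_eq_one _ fun s hs => ((hASM s hs).1 i).2)
    (fun j => by rw [← hsum]; exact sum_headSum_of_sum_eq_one _ fun s hs => ((hASM s hs).2 j).2)
  exact ⟨σ, fun i => (h01 i (σ i)).resolve_right (hσ i).ne⟩

lemma headSum_self (v : Fin n → ℤ) : headSum v n = ∑ s, v s := by
  simp [headSum]

lemma isAshm_of_forall_isAsm {A : Fin n → Fin n → Fin n → ℤ}
    (hASM : ∀ s : Fin n, IsAsm (fun i j => A i j s))
    (halt : ∀ i j t : Fin n, headSum (A i j) (t.1 + 1) = 0 ∨ headSum (A i j) (t.1 + 1) = 1) :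
    IsAshm A := by
  have hle i j : ∑ s, A i j s ≤ 1 := by
    rcases headSum_mem_of_forall_lt (fun t _ => halt i j t) le_rfl le_rfl with h | h <;>
      simp only [headSum_self] at h <;> omega
  refine ⟨fun j s => (hASM s).2 j, fun i s => (hASM s).1 i,
    fun i j => ⟨fun t => sum_filter_le_eq_headSum (A i j) t ▸ halt i j t, ?_⟩⟩
  have hcol : ∑ i, ∑ s, A i j s = ∑ _ : Fin n, (1 : ℤ) := by
    simpa [headSum_self] using
      sum_headSum_of_sum_eq_one (fun i s => A i j s) (k := n) fun s _ => ((hASM s).2 j).2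
  exact (sum_eq_sum_iff_of_le fun i _ => hle i j).mp hcol i (mem_univ i)

def updatePlane (A : Fin n → Fin n → Fin n → ℤ) (k : ℕ) (P : Fin n → Fin n → ℤ) :
    Fin n → Fin n → Fin n → ℤ :=
  fun i j s => if s.1 = k then P i j else A i j s

variable {A : Fin n → Fin n → Fin n → ℤ} {k : ℕ} {P : Fin n → Fin n → ℤ}

lemma isAsm_updatePlane (hASM : ∀ s : Fin n, s.1 < k → IsAsm (fun i j => A i j s))
    (hP : IsAsm P) (s : Fin n) (hs : s.1 < k + 1) :
    IsAsm (fun i j => updatePlane A k P i j s) := by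
  by_cases h : s.1 = k
  · simpa only [updatePlane, h, if_true] using hP
  · simpa only [updatePlane, h, if_false] using hASM s (by omega)

lemma headSum_updatePlane_of_le (i j : Fin n) {m : ℕ} (hm : m ≤ k) :
    headSum (updatePlane A k P i j) m = headSum (A i j) m :=
  headSum_congr fun _ hs => if_neg (by omega)

lemma headSum_updatePlane_succ (i j : Fin n) (hk : k < n) :
    headSum (updatePlane A k P i j) (k + 1) = headSum (A i j) k + P i j := by
  rw [headSum_succ _ hk, headSum_updatePlane_of_le i j le_rfl, updatePlane, if_pos rfl]

lemma headSum_updatePlane_perm_mem (hk : k < n)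
    (halt : ∀ i j t : Fin n, t.1 < k →
      headSum (A i j) (t.1 + 1) = 0 ∨ headSum (A i j) (t.1 + 1) = 1)
    {σ : Equiv.Perm (Fin n)} (hσ : ∀ i, headSum (A i (σ i)) k = 0) (i j t : Fin n)
    (ht : t.1 < k + 1) :
    headSum (updatePlane A k (fun i j => if σ i = j then 1 else 0) i j) (t.1 + 1) = 0 ∨
      headSum (updatePlane A k (fun i j => if σ i = j then 1 else 0) i j) (t.1 + 1) = 1 := by
  rcases Nat.lt_succ_iff_lt_or_eq.mp ht with ht | ht
  · rw [headSum_updatePlane_of_le i j ht]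
    exact halt i j t ht
  · rw [ht, headSum_updatePlane_succ i j hk]
    by_cases hij : σ i = j
    · subst hij
      simp [hσ i]
    · simpa [hij] using headSum_mem_of_forall_lt (halt i j) le_rfl hk.le

end Hypermatrix

theorem stmt14_general {n k : ℕ} (A : Fin n → Fin n → Fin n → ℤ)
    (hASM : ∀ s : Fin n, s.1 < k → IsAsm (fun i j => A i j s))
    (halt : ∀ i j : Fin n, ∀ t : Fin n, t.1 < k →
        (∑ s ∈ Finset.univ.filter (fun s : Fin n => s ≤ t), A i j s) = 0 ∨
        (∑ s ∈ Finset.univ.filter (fun s : Fin n => s ≤ t), A i j s) = 1) :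
    ∃ B : Fin n → Fin n → Fin n → ℤ, IsAshm B ∧
      (∀ s : Fin n, s.1 < k → ∀ i j : Fin n, B i j s = A i j s) ∧
      (∀ s : Fin n, k ≤ s.1 → ∃ σ : Equiv.Perm (Fin n), ∀ i j : Fin n,
          B i j s = if σ i = j then (1 : ℤ) else 0) := by
  simp only [sum_filter_le_eq_headSum] at halt
  induction h : n - k generalizing k A with
  | zero =>
    refine ⟨A, isAshm_of_forall_isAsm (fun s => hASM s (by omega))
      (fun i j t => halt i j t (by omega)), fun _ _ _ _ => rfl, fun s hs => ?_⟩
    omega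
  | succ m ih =>
    have hk : k < n := by omega
    obtain ⟨σ, hσ⟩ := exists_perm_headSum_eq_zero hk hASM halt
    obtain ⟨B, hB, hBA, hBperm⟩ := ih (updatePlane A k fun i j => if σ i = j then 1 else 0)
      (isAsm_updatePlane hASM (isAsm_perm σ)) (headSum_updatePlane_perm_mem hk halt hσ)
      (by omega)
    refine ⟨B, hB, fun s hs i j => (hBA s (by omega) i j).trans (if_neg (by omega)),
      fun s hs => ?_⟩
    rcases hs.eq_or_lt with rfl | hs
    · exact ⟨σ, fun i j => (hBA s (by omega) i j).trans (if_pos rfl)⟩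
    · exact hBperm s hs

theorem stmt14 {n k : ℕ} (hk : k < n) (A : Fin n → Fin n → Fin n → ℤ)
    (hASM : ∀ s : Fin n, s.1 < k → IsAsm (fun i j => A i j s))
    (halt : ∀ i j : Fin n, ∀ t : Fin n, t.1 < k →
        (∑ s ∈ Finset.univ.filter (fun s : Fin n => s ≤ t), A i j s) = 0 ∨
        (∑ s ∈ Finset.univ.filter (fun s : Fin n => s ≤ t), A i j s) = 1) :
    ∃ B : Fin n → Fin n → Fin n → ℤ, IsAshm B ∧
      (∀ s : Fin n, s.1 < k → ∀ i j : Fin n, B i j s = A i j s) ∧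
      (∀ s : Fin n, k ≤ s.1 → ∃ σ : Equiv.Perm (Fin n), ∀ i j : Fin n,
          B i j s = if σ i = j then (1 : ℤ) else 0) :=
  stmt14_general A hASM halt
end

section
/- A nonnegative integral n×n matrix in which every row sum and every column sum equals k can be written as a sum of k permutation matrices. -/
open Finset

/-!
Induction on `k`. For `k > 0`, Hall's condition holds for the bipartite graph on rows and columns
whose edges are the nonzero entries of `A`: the entries in the rows of a set `s` all lie in the
columns of its neighbourhood `N(s)`, so `k * #s ≤ k * #N(s)` by counting them once along rows and
once along columns. A perfect matching is a permutation `σ` with `A i (σ i) ≠ 0`; subtracting its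
permutation matrix leaves line sums `k - 1`.
-/

section LineSums

variable {ι κ : Type*} [Fintype ι] [Fintype κ]

theorem card_le_card_biUnion_support [DecidableEq κ] {A : Matrix ι κ ℕ} {c : ℕ} (hc : 0 < c)
    (hrow : ∀ i, ∑ j, A i j = c) (hcol : ∀ j, ∑ i, A i j ≤ c) (s : Finset ι) :
    #s ≤ #(s.biUnion fun i => {j | A i j ≠ 0}) := by
  set N := s.biUnion fun i => {j | A i j ≠ 0}
  have hrow_N : ∀ i ∈ s, ∑ j ∈ N, A i j = c := fun i hi => by
    rw [← hrow i]
    refine sum_subset (subset_univ N) fun j _ hj => ?_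
    by_contra hA
    exact hj (mem_biUnion.mpr ⟨i, hi, by simpa using hA⟩)
  refine le_of_mul_le_mul_left ?_ hc
  calc c * #s = ∑ i ∈ s, ∑ j ∈ N, A i j := by
        rw [sum_congr rfl hrow_N, sum_const, smul_eq_mul, mul_comm]
    _ = ∑ j ∈ N, ∑ i ∈ s, A i j := sum_comm
    _ ≤ ∑ j ∈ N, ∑ i, A i j := sum_le_sum fun j _ => sum_le_sum_of_subset (subset_univ s)
    _ ≤ ∑ _j ∈ N, c := sum_le_sum fun j _ => hcol j
    _ = c * #N := by rw [sum_const, smul_eq_mul, mul_comm]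

theorem exists_injective_forall_ne_zero {A : Matrix ι κ ℕ} {c : ℕ} (hc : 0 < c)
    (hrow : ∀ i, ∑ j, A i j = c) (hcol : ∀ j, ∑ i, A i j ≤ c) :
    ∃ f : ι → κ, Function.Injective f ∧ ∀ i, A i (f i) ≠ 0 := by
  classical
  obtain ⟨f, hf_inj, hf⟩ := (all_card_le_biUnion_card_iff_exists_injective _).mp
    (card_le_card_biUnion_support hc hrow hcol)
  exact ⟨f, hf_inj, fun i => by simpa using hf i⟩

end LineSums

section Square

variable {ι : Type*} [Fintype ι]

theorem exists_perm_forall_ne_zero {A : Matrix ι ι ℕ} {c : ℕ} (hc : 0 < c)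
    (hrow : ∀ i, ∑ j, A i j = c) (hcol : ∀ j, ∑ i, A i j = c) :
    ∃ σ : Equiv.Perm ι, ∀ i, A i (σ i) ≠ 0 := by
  obtain ⟨f, hf_inj, hf⟩ := exists_injective_forall_ne_zero hc hrow fun j => (hcol j).le
  exact ⟨Equiv.ofBijective f (Finite.injective_iff_bijective.mp hf_inj), hf⟩

variable [DecidableEq ι]

theorem exists_perm_add_of_lineSums_eq_succ {A : Matrix ι ι ℕ} {c : ℕ}
    (hrow : ∀ i, ∑ j, A i j = c + 1) (hcol : ∀ j, ∑ i, A i j = c + 1) :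
    ∃ (σ : Equiv.Perm ι) (B : Matrix ι ι ℕ), (∀ i, ∑ j, B i j = c) ∧ (∀ j, ∑ i, B i j = c) ∧
      ∀ i j, A i j = B i j + if σ i = j then 1 else 0 := by
  obtain ⟨σ, hσ⟩ := exists_perm_forall_ne_zero c.succ_pos hrow hcol
  set P : Matrix ι ι ℕ := fun i j => if σ i = j then 1 else 0
  have hP_le : ∀ i j, P i j ≤ A i j := fun i j => by
    by_cases h : σ i = j
    · simpa [P, h, Nat.one_le_iff_ne_zero] using hσ i
    · simp [P, h]
  have hP_row : ∀ i, ∑ j, P i j = 1 := fun i => by simp [P]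
  have hP_col : ∀ j, ∑ i, P i j = 1 := fun j => by
    rw [← σ.symm.sum_comp]
    simp [P]
  refine ⟨σ, A - P, fun i => ?_, fun j => ?_,
    fun i j => (Nat.sub_add_cancel (hP_le i j)).symm⟩
  · simp only [Matrix.sub_apply]
    rw [sum_tsub_distrib _ fun j _ => hP_le i j, hrow, hP_row, Nat.add_sub_cancel]
  · simp only [Matrix.sub_apply]
    rw [sum_tsub_distrib _ fun i _ => hP_le i j, hcol, hP_col, Nat.add_sub_cancel]

theorem exists_perms_sum_eq_of_lineSums_eq {c : ℕ} (A : Matrix ι ι ℕ)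
    (hrow : ∀ i, ∑ j, A i j = c) (hcol : ∀ j, ∑ i, A i j = c) :
    ∃ P : Fin c → Equiv.Perm ι, ∀ i j, A i j = ∑ t, if P t i = j then 1 else 0 := by
  induction c generalizing A with
  | zero =>
    exact ⟨Fin.elim0, fun i j => by simpa using sum_eq_zero_iff.mp (hrow i) j (mem_univ j)⟩
  | succ c ih =>
    obtain ⟨σ, B, hB_row, hB_col, hAB⟩ := exists_perm_add_of_lineSums_eq_succ hrow hcol
    obtain ⟨P, hP⟩ := ih B hB_row hB_col
    refine ⟨Fin.cons σ P, fun i j => ?_⟩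
    rw [Fin.sum_univ_succ, Fin.cons_zero, hAB, hP, add_comm]
    simp only [Fin.cons_succ]

end Square

theorem stmt15 {n k : ℕ} (A : Matrix (Fin n) (Fin n) ℕ)
    (hrow : ∀ i : Fin n, (∑ j : Fin n, A i j) = k)
    (hcol : ∀ j : Fin n, (∑ i : Fin n, A i j) = k) :
    ∃ P : Fin k → Equiv.Perm (Fin n), ∀ i j : Fin n,
      A i j = ∑ t : Fin k, (if P t i = j then 1 else 0) :=
  exists_perms_sum_eq_of_lineSums_eq A hrow hcol
end

section
/- Let n = 2k+1 be odd and let A be an n×n matrix with entries in {0,1,−1} all of whose row and column sums equal 1 (a semi-ASM). Then there exists an n×n (0,±1)-matrix B with all entries nonzero and all row and column sums equal to 1 that agrees with A in every position where A is nonzero. -/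
/-
In a line of odd length whose entries lie in {-1, 0, 1} and sum to 1, the number of nonzero
entries is odd, so the number of zeros is even. Pairing the zeros of every row gives a
fixed-point-free involution `ρ` of the zero cells, and pairing those of every column gives
another one, `σ`. Filling the zeros with signs `ε` such that `ε ∘ ρ = -ε` and `ε ∘ σ = -ε` keeps
every line sum equal to 1. Such signs exist because `ρ` conjugates `τ = σ ∘ ρ` to its inverse:
if `ρ x` lay in the `τ`-orbit of `x`, the midpoint of the orbit segment from `x` to `ρ x` would be a
fixed point of `ρ` or of `σ`. Hence `ρ` induces a fixed-point-free involution on `τ`-orbits, and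
giving the sign `+1` to one orbit of each pair yields `ε`.
-/

open Finset

open Function Equiv

section Involutions

variable {α : Type*}

theorem exists_sign_neg_of_involutive {g : α → α} (hg : Involutive g) (hfix : ∀ x, g x ≠ x) :
    ∃ ε : α → ℤ, (∀ x, ε x = 1 ∨ ε x = -1) ∧ ∀ x, ε (g x) = -ε x := by
  classical
  let _ : LinearOrder α := linearOrderOfSTO WellOrderingRel
  refine ⟨fun x => if x < g x then 1 else -1, fun x => by by_cases h : x < g x <;> simp [h],
    fun x => ?_⟩
  rcases (hfix x).lt_or_gt with h | h <;> simp [hg x, h, h.not_gt]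

theorem apply_zpow_mul_apply_of_involutive {ρ σ : Perm α} (hρ : Involutive ρ)
    (hσ : Involutive σ) (k : ℤ) (x : α) :
    ρ (((σ * ρ) ^ k) x) = ((σ * ρ) ^ (-k)) (ρ x) := by
  have hρ' : ρ⁻¹ = ρ := inv_eq_of_mul_eq_one_right (Equiv.ext hρ)
  have hσ' : σ⁻¹ = σ := inv_eq_of_mul_eq_one_right (Equiv.ext hσ)
  have h : SemiconjBy ρ (σ * ρ) (σ * ρ)⁻¹ := by
    rw [SemiconjBy, mul_inv_rev, hρ', hσ', mul_assoc]
  rw [zpow_neg, ← inv_zpow]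
  exact congrArg (· x) (h.zpow_right k).eq

theorem not_sameCycle_apply_of_involutive {ρ σ : Perm α} (hρ : Involutive ρ)
    (hσ : Involutive σ) (hρfix : ∀ x, ρ x ≠ x) (hσfix : ∀ x, σ x ≠ x) (x : α) :
    ¬ (σ * ρ).SameCycle x (ρ x) := by
  set τ := σ * ρ
  have hadd : ∀ a b : ℤ, (τ ^ a) ((τ ^ b) x) = (τ ^ (a + b)) x := fun a b => by
    rw [← Perm.mul_apply, ← zpow_add]
  rintro ⟨k, hk⟩
  obtain ⟨t, rfl | rfl⟩ := Int.even_or_odd' k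
  · apply hρfix ((τ ^ t) x)
    rw [apply_zpow_mul_apply_of_involutive hρ hσ, ← hk, hadd]
    congr 2; ring
  · apply hσfix ((τ ^ (t + 1)) x)
    have hσρ : ∀ y, σ y = τ (ρ y) := fun y => by simp [τ, hρ y]
    have hadd_one : ∀ b : ℤ, τ ((τ ^ b) x) = (τ ^ (1 + b)) x := fun b => by
      rw [← Perm.mul_apply, ← zpow_one_add]
    rw [hσρ, apply_zpow_mul_apply_of_involutive hρ hσ, ← hk, hadd, hadd_one]
    congr 2; ring

theorem exists_sign_neg_of_two_involutive {ρ σ : α → α} (hρ : Involutive ρ)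
    (hσ : Involutive σ) (hρfix : ∀ x, ρ x ≠ x) (hσfix : ∀ x, σ x ≠ x) :
    ∃ ε : α → ℤ, (∀ x, ε x = 1 ∨ ε x = -1) ∧ (∀ x, ε (ρ x) = -ε x) ∧ ∀ x, ε (σ x) = -ε x := by
  let τ := hσ.toPerm σ * hρ.toPerm ρ
  let orbits := Perm.SameCycle.setoid τ
  have hresp : ∀ x y, τ.SameCycle x y → τ.SameCycle (ρ x) (ρ y) := by
    rintro x y ⟨k, rfl⟩
    exact ⟨-k, (apply_zpow_mul_apply_of_involutive (ρ := hρ.toPerm ρ) hρ hσ k x).symm⟩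
  let ρbar : Quotient orbits → Quotient orbits := Quotient.map ρ hresp
  have hρbar : Involutive ρbar := by
    rintro ⟨x⟩
    exact congrArg (Quotient.mk orbits) (hρ x)
  have hρbarfix : ∀ q, ρbar q ≠ q := by
    rintro ⟨x⟩ h
    exact not_sameCycle_apply_of_involutive hρ hσ hρfix hσfix x (Quotient.exact h).symm
  obtain ⟨δ, hδ, hδρ⟩ := exists_sign_neg_of_involutive hρbar hρbarfix
  refine ⟨fun x => δ (Quotient.mk orbits x), fun x => hδ _, fun x => hδρ (Quotient.mk orbits x),
    fun x => ?_⟩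
  have hσx : Quotient.mk orbits (σ x) = ρbar (Quotient.mk orbits x) :=
    Quotient.sound (Perm.SameCycle.symm ⟨1, by simp [τ, hρ x]⟩)
  simp only [hσx, hδρ]

end Involutions

theorem exists_involutive_ne_of_even_card {α : Type*} [Fintype α] (h : Even (Fintype.card α)) :
    ∃ g : α → α, Involutive g ∧ ∀ x, g x ≠ x := by
  obtain ⟨m, hm⟩ := h
  let e : α ≃ Fin m × Bool := Fintype.equivOfCardEq (by simp [hm, mul_two])
  refine ⟨fun x => e.symm ((e x).1, !(e x).2), fun x => by simp, fun x hx => ?_⟩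
  simpa using congrArg (fun y => (e y).2) hx

theorem exists_sign_sum_eq_zero_of_even_card {R C : Type*} [Fintype R] [Fintype C]
    (P : R → C → Prop) [DecidableRel P]
    (hrow : ∀ i, Even (Fintype.card {j // P i j}))
    (hcol : ∀ j, Even (Fintype.card {i // P i j})) :
    ∃ ε : R → C → ℤ, (∀ i j, ε i j = 1 ∨ ε i j = -1) ∧
      (∀ i, ∑ j with P i j, ε i j = 0) ∧ ∀ j, ∑ i with P i j, ε i j = 0 := by
  choose g hg hgfix using fun i => exists_involutive_ne_of_even_card (hrow i)
  choose g' hg' hg'fix using fun j => exists_involutive_ne_of_even_card (hcol j)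
  let Z := {p : R × C // P p.1 p.2}
  let ρ : Z → Z := fun z => ⟨(z.1.1, g z.1.1 ⟨z.1.2, z.2⟩), (g z.1.1 ⟨z.1.2, z.2⟩).2⟩
  let σ : Z → Z := fun z => ⟨(g' z.1.2 ⟨z.1.1, z.2⟩, z.1.2), (g' z.1.2 ⟨z.1.1, z.2⟩).2⟩
  have hρ : Involutive ρ := fun z => Subtype.ext (Prod.ext rfl (congrArg Subtype.val (hg _ _)))
  have hσ : Involutive σ := fun z => Subtype.ext (Prod.ext (congrArg Subtype.val (hg' _ _)) rfl)
  have hρfix : ∀ z, ρ z ≠ z := fun z h => hgfix _ _ (Subtype.ext (congrArg (·.1.2) h))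
  have hσfix : ∀ z, σ z ≠ z := fun z h => hg'fix _ _ (Subtype.ext (congrArg (·.1.1) h))
  obtain ⟨η, hη, hηρ, hησ⟩ := exists_sign_neg_of_two_involutive hρ hσ hρfix hσfix
  let ε : R → C → ℤ := fun i j => if h : P i j then η ⟨(i, j), h⟩ else 1
  refine ⟨ε, fun i j => ?_, fun i => ?_, fun j => ?_⟩
  · by_cases h : P i j <;> simp [ε, h, hη]
  · rw [sum_subtype (p := (P i ·)) _ (fun j => by simp) _]
    refine sum_ninvolution (g i) (fun j => ?_) (fun j _ => hgfix i j) (fun _ => mem_univ _)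
      (hg i)
    simp only [ε, dif_pos j.2, dif_pos (g i j).2]
    exact add_eq_zero_iff_eq_neg'.2 (hηρ ⟨(i, j), j.2⟩)
  · rw [sum_subtype (p := (P · j)) _ (fun i => by simp) _]
    refine sum_ninvolution (g' j) (fun i => ?_) (fun i _ => hg'fix j i) (fun _ => mem_univ _)
      (hg' j)
    simp only [ε, dif_pos i.2, dif_pos (g' j i).2]
    exact add_eq_zero_iff_eq_neg'.2 (hησ ⟨(i, j), i.2⟩)

theorem even_card_zeros_of_sum_eq_one {ι : Type*} [Fintype ι] (hι : Odd (Fintype.card ι))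
    {v : ι → ℤ} (hv : ∀ j, v j = -1 ∨ v j = 0 ∨ v j = 1) (hsum : ∑ j, v j = 1) :
    Even (Fintype.card {j // v j = 0}) := by
  have hnonzero : ((#{j | v j ≠ 0} : ℕ) : ZMod 2) = ((∑ j, v j : ℤ) : ZMod 2) := by
    rw [natCast_card_filter, Int.cast_sum]
    refine sum_congr rfl fun j _ => ?_
    rcases hv j with h | h | h <;> simp [h]
  have hcard := congrArg (Nat.cast : ℕ → ZMod 2)
    (card_filter_add_card_filter_not (s := univ) (v · = 0))
  push_cast at hcard
  rw [hnonzero, hsum, Int.cast_one, card_univ, ZMod.natCast_eq_one_iff_odd.mpr hι] at hcard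
  rw [Fintype.card_subtype, ← ZMod.natCast_eq_zero_iff_even]
  linear_combination hcard

theorem sum_ite_eq_zero_else_self {ι M : Type*} [Fintype ι] [AddCommMonoid M] [DecidableEq M]
    (v w : ι → M) :
    ∑ j, (if v j = 0 then w j else v j) = ∑ j with v j = 0, w j + ∑ j, v j := by
  rw [sum_ite, ← sum_filter_ne_zero (s := univ)]

theorem stmt19 {n : ℕ} (hn : Odd n) (A : Matrix (Fin n) (Fin n) ℤ)
    (hent : ∀ i j : Fin n, A i j = -1 ∨ A i j = 0 ∨ A i j = 1)
    (hrow : ∀ i : Fin n, (∑ j : Fin n, A i j) = 1)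
    (hcol : ∀ j : Fin n, (∑ i : Fin n, A i j) = 1) :
    ∃ B : Matrix (Fin n) (Fin n) ℤ,
      (∀ i j : Fin n, B i j = -1 ∨ B i j = 1) ∧
      (∀ i : Fin n, (∑ j : Fin n, B i j) = 1) ∧
      (∀ j : Fin n, (∑ i : Fin n, B i j) = 1) ∧
      (∀ i j : Fin n, A i j ≠ 0 → B i j = A i j) := by
  have hodd : Odd (Fintype.card (Fin n)) := by rwa [Fintype.card_fin]
  -- instance search does not see through `Matrix` to find this one by itself
  let _ : DecidableRel (fun i j => A i j = 0) := fun _ _ => inferInstance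
  obtain ⟨ε, hε, hεrow, hεcol⟩ := exists_sign_sum_eq_zero_of_even_card (fun i j => A i j = 0)
    (fun i => even_card_zeros_of_sum_eq_one hodd (hent i) (hrow i))
    (fun j => even_card_zeros_of_sum_eq_one hodd (fun i => hent i j) (hcol j))
  refine ⟨fun i j => if A i j = 0 then ε i j else A i j, fun i j => ?_, fun i => ?_, fun j => ?_,
    fun i j h => if_neg h⟩
  · by_cases h : A i j = 0
    · simpa [h, or_comm] using hε i j
    · rcases hent i j with h' | h' | h' <;> simp_all
  · rw [sum_ite_eq_zero_else_self, hεrow, hrow, zero_add]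
  · rw [sum_ite_eq_zero_else_self (fun i => A i j), hεcol, hcol, zero_add]
end
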